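/- arXiv:1608.04072 — 8 statements merged into one kernel-verified Lean document; each statement's English description precedes it below -/
import Mathlib

section
/- Let N ≥ 2 and λ > 0. Assume w : ℝ^N → ℝ is continuously differentiable, and there exist σ > 0 and ρ₀ > 0 such that both w(z) and ‖∇w(z)‖ are bounded by σ |z|^{−(N−1)/2} e^{−√λ|z|} for all |z| ≥ ρ₀. Assume ξ : ℝ^N → [0,1] is a C¹ function with ξ ≡ 0 on the ball B_ρ(0) and ξ ≡ 1 on ℝ^N \ B_{2ρ}(0), for some ρ > 0; for θ ∈ ℝ^N and R > 0 set Φ^{Rθ}(x) := ξ(x) w(x − Rθ). Then for every θ ∈ ℝ^N with |θ| ≥ 1: lim_{R→∞} R^{(N−1)/2} e^{2R√λ} ∫_{ℝ^N} ( ‖∇Φ^{Rθ}(x) − ∇w(x − Rθ)‖² + λ (Φ^{Rθ}(x) − w(x − Rθ))² ) dx = 0. -/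
/-!
Outside `closedBall 0 (2ρ)` the cutoff `ξ` is identically `1`, so the energy density of
`Φ^{Rθ} - w(· - Rθ)` vanishes there. On the ball, `|x - Rθ| ≥ R - 2ρ`, so the decay
hypothesis bounds the density by a constant times `(R - 2ρ)^{-(N-1)} e^{-2√λ (R - 2ρ)}`.
After multiplying by `R^{(N-1)/2} e^{2R√λ}` the exponentials cancel up to the constant
`e^{4ρ√λ}`, leaving `O(R^{-(N-1)/2})`, which tends to `0` because `N ≥ 2`.
-/

open MeasureTheory Filter Metric Set Topology

section CutoffEnergy

variable {E : Type*} [NormedAddCommGroup E] [InnerProductSpace ℝ E] [CompleteSpace E]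
  {ξ g : E → ℝ} {a x : E}

theorem hasGradientAt_mul_comp_sub (hξ : DifferentiableAt ℝ ξ x)
    (hg : DifferentiableAt ℝ g (x - a)) :
    HasGradientAt (fun y => ξ y * g (y - a))
      (ξ x • gradient g (x - a) + g (x - a) • gradient ξ x) x := by
  rw [hasGradientAt_iff_hasFDerivAt, map_add, map_smul, map_smul, toDual_gradient, toDual_gradient]
  exact hξ.hasFDerivAt.mul (hg.hasFDerivAt.comp x ((hasFDerivAt_id x).sub_const a))

theorem gradient_mul_comp_sub_sub_gradient (hξ : DifferentiableAt ℝ ξ x)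
    (hg : DifferentiableAt ℝ g (x - a)) :
    gradient (fun y => ξ y * g (y - a)) x - gradient g (x - a) =
      (ξ x - 1) • gradient g (x - a) + g (x - a) • gradient ξ x := by
  rw [(hasGradientAt_mul_comp_sub hξ hg).gradient]
  module

theorem gradient_mul_comp_sub_of_eventuallyEq_one (hξ : ξ =ᶠ[𝓝 x] 1)
    (hg : DifferentiableAt ℝ g (x - a)) :
    gradient (fun y => ξ y * g (y - a)) x = gradient g (x - a) := by
  have hξd : DifferentiableAt ℝ ξ x := (differentiableAt_const 1).congr_of_eventuallyEq hξ
  have hgradξ : gradient ξ x = 0 := by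
    rw [hξ.gradient_eq]; exact gradient_fun_const x 1
  rw [← sub_eq_zero, gradient_mul_comp_sub_sub_gradient hξd hg, hξ.eq_of_nhds, hgradξ]
  simp

noncomputable def cutoffEnergyDensity (lam : ℝ) (ξ g : E → ℝ) (a x : E) : ℝ :=
  ‖gradient (fun y => ξ y * g (y - a)) x - gradient g (x - a)‖ ^ 2 +
    lam * (ξ x * g (x - a) - g (x - a)) ^ 2

variable {lam M m : ℝ}

theorem cutoffEnergyDensity_nonneg (hlam : 0 ≤ lam) : 0 ≤ cutoffEnergyDensity lam ξ g a x := by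
  unfold cutoffEnergyDensity; positivity

theorem cutoffEnergyDensity_eq_zero_of_eventuallyEq_one (hξ : ξ =ᶠ[𝓝 x] 1)
    (hg : DifferentiableAt ℝ g (x - a)) : cutoffEnergyDensity lam ξ g a x = 0 := by
  simp [cutoffEnergyDensity, gradient_mul_comp_sub_of_eventuallyEq_one hξ hg, hξ.eq_of_nhds]

theorem cutoffEnergyDensity_le (hlam : 0 ≤ lam) (hξ : DifferentiableAt ℝ ξ x)
    (hg : DifferentiableAt ℝ g (x - a)) (hξx : ξ x ∈ Icc 0 1) (hM : ‖gradient ξ x‖ ≤ M)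
    (hgm : |g (x - a)| ≤ m) (hgm' : ‖gradient g (x - a)‖ ≤ m) :
    cutoffEnergyDensity lam ξ g a x ≤ ((M + 1) ^ 2 + lam) * m ^ 2 := by
  have hξ1 : |ξ x - 1| ≤ 1 := by rw [abs_le]; constructor <;> linarith [hξx.1, hξx.2]
  have hgrad : ‖gradient (fun y => ξ y * g (y - a)) x - gradient g (x - a)‖ ≤ (M + 1) * m :=
    calc _ = ‖(ξ x - 1) • gradient g (x - a) + g (x - a) • gradient ξ x‖ := by
          rw [gradient_mul_comp_sub_sub_gradient hξ hg]
      _ ≤ |ξ x - 1| * ‖gradient g (x - a)‖ + |g (x - a)| * ‖gradient ξ x‖ := by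
          simpa only [norm_smul, Real.norm_eq_abs] using
            norm_add_le ((ξ x - 1) • gradient g (x - a)) (g (x - a) • gradient ξ x)
      _ ≤ 1 * m + m * M := by
          gcongr
          exact (abs_nonneg _).trans hgm
      _ = (M + 1) * m := by ring
  have hval : (ξ x * g (x - a) - g (x - a)) ^ 2 ≤ m ^ 2 := by
    rw [← sq_abs, show ξ x * g (x - a) - g (x - a) = (ξ x - 1) * g (x - a) by ring, abs_mul]
    gcongr
    calc |ξ x - 1| * |g (x - a)| ≤ 1 * m := by gcongr
      _ = m := one_mul m
  calc cutoffEnergyDensity lam ξ g a x ≤ ((M + 1) * m) ^ 2 + lam * m ^ 2 := by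
        unfold cutoffEnergyDensity; gcongr
    _ = ((M + 1) ^ 2 + lam) * m ^ 2 := by ring

variable [MeasurableSpace E] [ProperSpace E] (μ : Measure E)
  [IsFiniteMeasureOnCompacts μ] {r : ℝ}

theorem integral_cutoffEnergyDensity_le (hlam : 0 ≤ lam) (hξ : Differentiable ℝ ξ)
    (hg : Differentiable ℝ g) (hξ01 : ∀ x, ξ x ∈ Icc 0 1) (hξ1 : ∀ x ∉ ball 0 r, ξ x = 1)
    (hM : ∀ x ∈ closedBall 0 r, ‖gradient ξ x‖ ≤ M)
    (hm : ∀ x ∈ closedBall 0 r, |g (x - a)| ≤ m ∧ ‖gradient g (x - a)‖ ≤ m) :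
    ∫ x, cutoffEnergyDensity lam ξ g a x ∂μ ≤
      ((M + 1) ^ 2 + lam) * m ^ 2 * μ.real (closedBall 0 r) := by
  have hzero : ∀ x ∉ closedBall 0 r, cutoffEnergyDensity lam ξ g a x = 0 := by
    intro x hx
    refine cutoffEnergyDensity_eq_zero_of_eventuallyEq_one ?_ (hg _)
    filter_upwards [isClosed_closedBall.isOpen_compl.mem_nhds hx] with y hy
    exact hξ1 y fun hy' => hy (ball_subset_closedBall hy')
  rw [← setIntegral_eq_integral_of_forall_compl_eq_zero hzero]
  refine (Real.le_norm_self _).trans (norm_setIntegral_le_of_norm_le_const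
    measure_closedBall_lt_top fun x hx => ?_)
  rw [Real.norm_of_nonneg (cutoffEnergyDensity_nonneg hlam)]
  exact cutoffEnergyDensity_le hlam (hξ x) (hg _) (hξ01 x) (hM x hx) (hm x hx).1 (hm x hx).2

end CutoffEnergy

theorem sub_le_norm_sub_smul {F : Type*} [NormedAddCommGroup F] [NormedSpace ℝ F] {x θ : F}
    {r R : ℝ} (hx : ‖x‖ ≤ r) (hθ : 1 ≤ ‖θ‖) (hR : 0 ≤ R) : R - r ≤ ‖x - R • θ‖ := by
  have hRθ : R ≤ ‖R • θ‖ := by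
    rw [norm_smul, Real.norm_of_nonneg hR]; exact le_mul_of_one_le_right hR hθ
  have := norm_sub_norm_le (R • θ) x
  rw [norm_sub_rev] at this
  linarith

theorem apply_sub_smul_le_of_antitoneOn {F : Type*} [NormedAddCommGroup F] [NormedSpace ℝ F]
    {u : F → ℝ} {φ : ℝ → ℝ} {ρ₀ r R : ℝ} {x θ : F} (hφ : AntitoneOn φ (Ioi 0)) (hρ₀ : 0 < ρ₀)
    (hu : ∀ z, ρ₀ ≤ ‖z‖ → u z ≤ φ ‖z‖) (hx : x ∈ closedBall 0 r) (hθ : 1 ≤ ‖θ‖) (hR0 : 0 ≤ R)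
    (hR : ρ₀ + r ≤ R) : u (x - R • θ) ≤ φ (R - r) := by
  have hz := sub_le_norm_sub_smul (mem_closedBall_zero_iff.1 hx) hθ hR0
  exact (hu _ (by linarith)).trans
    (hφ (show 0 < R - r by linarith) (show 0 < ‖x - R • θ‖ by linarith) hz)

theorem antitoneOn_mul_rpow_neg_mul_exp_neg {σ e s : ℝ} (hσ : 0 ≤ σ) (he : 0 ≤ e) (hs : 0 ≤ s) :
    AntitoneOn (fun t : ℝ => σ * t ^ (-e) * Real.exp (-(s * t))) (Ioi 0) := by
  intro t (ht : 0 < t) u _ htu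
  have hu : 0 < u := ht.trans_le htu
  have hpow : u ^ (-e) ≤ t ^ (-e) := Real.rpow_le_rpow_of_nonpos ht htu (neg_nonpos.2 he)
  exact mul_le_mul (mul_le_mul_of_nonneg_left hpow hσ) (Real.exp_le_exp.2 (by nlinarith))
    (Real.exp_nonneg _) (by positivity)

theorem rpow_mul_sq_rpow_sub_neg_le {e c R : ℝ} (he : 0 ≤ e) (hR : 0 < R) (hcR : 2 * c ≤ R) :
    R ^ e * ((R - c) ^ (-e)) ^ 2 ≤ 4 ^ e * R ^ (-e) := by
  have hhalf : (R - c) ^ (-e) ≤ 2 ^ e * R ^ (-e) := by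
    calc (R - c) ^ (-e) ≤ (R / 2) ^ (-e) :=
          Real.rpow_le_rpow_of_nonpos (by positivity) (by linarith) (neg_nonpos.2 he)
      _ = 2 ^ e * R ^ (-e) := by
          rw [Real.div_rpow hR.le zero_le_two, Real.rpow_neg zero_le_two, div_inv_eq_mul, mul_comm]
  have hRe : R ^ e * R ^ (-e) = 1 := by rw [← Real.rpow_add hR, add_neg_cancel, Real.rpow_zero]
  have h4 : (4 : ℝ) ^ e = 2 ^ e * 2 ^ e := by
    rw [← Real.mul_rpow zero_le_two zero_le_two]; norm_num
  calc R ^ e * ((R - c) ^ (-e)) ^ 2 ≤ R ^ e * (2 ^ e * R ^ (-e)) ^ 2 := by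
        gcongr
        exact Real.rpow_nonneg (by linarith) _
    _ = 4 ^ e * R ^ (-e) := by rw [h4]; linear_combination (2 ^ e * 2 ^ e * R ^ (-e)) * hRe

theorem tendsto_rpow_mul_sq_rpow_sub_neg {e : ℝ} (he : 0 < e) (c : ℝ) :
    Tendsto (fun R : ℝ => R ^ e * ((R - c) ^ (-e)) ^ 2) atTop (𝓝 0) := by
  have hlim := (tendsto_rpow_neg_atTop he).const_mul (4 ^ e)
  rw [mul_zero] at hlim
  refine squeeze_zero' ?_ ?_ hlim
  · filter_upwards [eventually_gt_atTop 0] with R hR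
    positivity
  · filter_upwards [eventually_gt_atTop 0, eventually_ge_atTop (2 * c)] with R hR hcR
    exact rpow_mul_sq_rpow_sub_neg_le he.le hR hcR

theorem tendsto_rpow_mul_exp_mul_sq_decay {e : ℝ} (he : 0 < e) (σ s c : ℝ) :
    Tendsto (fun R : ℝ => R ^ e * Real.exp (2 * R * s) *
      (σ * (R - c) ^ (-e) * Real.exp (-(s * (R - c)))) ^ 2) atTop (𝓝 0) := by
  have hexp (R : ℝ) :
      Real.exp (2 * R * s) * Real.exp (-(s * (R - c))) ^ 2 = Real.exp (2 * s * c) := by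
    rw [sq, ← Real.exp_add, ← Real.exp_add]
    ring_nf
  have key : (fun R : ℝ => R ^ e * Real.exp (2 * R * s) *
      (σ * (R - c) ^ (-e) * Real.exp (-(s * (R - c)))) ^ 2) =
      fun R => σ ^ 2 * Real.exp (2 * s * c) * (R ^ e * ((R - c) ^ (-e)) ^ 2) := by
    funext R
    rw [← hexp R]
    ring
  simpa [key] using (tendsto_rpow_mul_sq_rpow_sub_neg he c).const_mul
    (σ ^ 2 * Real.exp (2 * s * c))

theorem stmt4_general (N : ℕ) (hN : 2 ≤ N) (lam : ℝ) (hlam : 0 < lam)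
    (w : EuclideanSpace ℝ (Fin N) → ℝ) (hw : ContDiff ℝ 1 w)
    (σ ρ₀ : ℝ) (hσ : 0 < σ) (hρ₀ : 0 < ρ₀)
    (hwdecay : ∀ z : EuclideanSpace ℝ (Fin N), ρ₀ ≤ ‖z‖ →
      |w z| ≤ σ * ‖z‖ ^ (-(((N : ℝ) - 1) / 2)) * Real.exp (-(Real.sqrt lam * ‖z‖)) ∧
      ‖gradient w z‖ ≤ σ * ‖z‖ ^ (-(((N : ℝ) - 1) / 2)) * Real.exp (-(Real.sqrt lam * ‖z‖)))
    (ρ : ℝ)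
    (ξ : EuclideanSpace ℝ (Fin N) → ℝ) (hξ : ContDiff ℝ 1 ξ)
    (hξ01 : ∀ x, ξ x ∈ Set.Icc (0:ℝ) 1)
    (hξ1 : ∀ x ∉ Metric.ball (0 : EuclideanSpace ℝ (Fin N)) (2 * ρ), ξ x = 1)
    (θ : EuclideanSpace ℝ (Fin N)) (hθ : 1 ≤ ‖θ‖) :
    Tendsto (fun R : ℝ =>
        R ^ (((N : ℝ) - 1) / 2) * Real.exp (2 * R * Real.sqrt lam) *
          ∫ x, (‖gradient (fun x' => ξ x' * w (x' - R • θ)) x - gradient w (x - R • θ)‖ ^ 2 +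
            lam * (ξ x * w (x - R • θ) - w (x - R • θ)) ^ 2)) atTop (nhds 0) := by
  set s := Real.sqrt lam
  set e : ℝ := ((N : ℝ) - 1) / 2
  have he : 0 < e := by
    have : (2 : ℝ) ≤ N := by exact_mod_cast hN
    simp only [e]; linarith
  obtain ⟨M, hM⟩ : ∃ M, ∀ x ∈ closedBall (0 : EuclideanSpace ℝ (Fin N)) (2 * ρ),
      ‖gradient ξ x‖ ≤ M :=
    (isCompact_closedBall _ _).exists_bound_of_continuousOn
      ((InnerProductSpace.toDual ℝ _).symm.continuous.comp
        (hξ.continuous_fderiv one_ne_zero)).continuousOn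
  set m : ℝ → ℝ := fun R => σ * (R - 2 * ρ) ^ (-e) * Real.exp (-(s * (R - 2 * ρ)))
  have hm := antitoneOn_mul_rpow_neg_mul_exp_neg hσ.le he.le (Real.sqrt_nonneg lam)
  have hdecay : ∀ R, 0 ≤ R → ρ₀ + 2 * ρ ≤ R → ∀ x ∈ closedBall 0 (2 * ρ),
      |w (x - R • θ)| ≤ m R ∧ ‖gradient w (x - R • θ)‖ ≤ m R := fun R hR0 hR x hx =>
    ⟨apply_sub_smul_le_of_antitoneOn hm hρ₀ (fun z hz => (hwdecay z hz).1) hx hθ hR0 hR,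
      apply_sub_smul_le_of_antitoneOn hm hρ₀ (fun z hz => (hwdecay z hz).2) hx hθ hR0 hR⟩
  set V := volume.real (closedBall (0 : EuclideanSpace ℝ (Fin N)) (2 * ρ))
  set C := ((M + 1) ^ 2 + lam) * V
  have hlim := (tendsto_rpow_mul_exp_mul_sq_decay he σ s (2 * ρ)).const_mul C
  rw [mul_zero] at hlim
  refine squeeze_zero' ?_ ?_ hlim
  · filter_upwards [eventually_ge_atTop 0] with R hR
    exact mul_nonneg (by positivity) (integral_nonneg fun x => cutoffEnergyDensity_nonneg hlam.le)
  · filter_upwards [eventually_ge_atTop 0, eventually_ge_atTop (ρ₀ + 2 * ρ)] with R hR0 hR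
    have hI := integral_cutoffEnergyDensity_le volume hlam.le (hξ.differentiable one_ne_zero)
      (hw.differentiable one_ne_zero) hξ01 hξ1 hM (hdecay R hR0 hR)
    calc _ ≤ R ^ e * Real.exp (2 * R * s) * (((M + 1) ^ 2 + lam) * m R ^ 2 * V) := by
          gcongr; exact hI
      _ = C * (R ^ e * Real.exp (2 * R * s) * m R ^ 2) := by ring

theorem stmt4 (N : ℕ) (hN : 2 ≤ N) (lam : ℝ) (hlam : 0 < lam)
    (w : EuclideanSpace ℝ (Fin N) → ℝ) (hw : ContDiff ℝ 1 w)
    (σ ρ₀ : ℝ) (hσ : 0 < σ) (hρ₀ : 0 < ρ₀)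
    (hwdecay : ∀ z : EuclideanSpace ℝ (Fin N), ρ₀ ≤ ‖z‖ →
      |w z| ≤ σ * ‖z‖ ^ (-(((N : ℝ) - 1) / 2)) * Real.exp (-(Real.sqrt lam * ‖z‖)) ∧
      ‖gradient w z‖ ≤ σ * ‖z‖ ^ (-(((N : ℝ) - 1) / 2)) * Real.exp (-(Real.sqrt lam * ‖z‖)))
    (ρ : ℝ) (hρ : 0 < ρ)
    (ξ : EuclideanSpace ℝ (Fin N) → ℝ) (hξ : ContDiff ℝ 1 ξ)
    (hξ01 : ∀ x, ξ x ∈ Set.Icc (0:ℝ) 1)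
    (hξ0 : ∀ x ∈ Metric.ball (0 : EuclideanSpace ℝ (Fin N)) ρ, ξ x = 0)
    (hξ1 : ∀ x ∉ Metric.ball (0 : EuclideanSpace ℝ (Fin N)) (2 * ρ), ξ x = 1)
    (θ : EuclideanSpace ℝ (Fin N)) (hθ : 1 ≤ ‖θ‖) :
    Tendsto (fun R : ℝ =>
        R ^ (((N : ℝ) - 1) / 2) * Real.exp (2 * R * Real.sqrt lam) *
          ∫ x, (‖gradient (fun x' => ξ x' * w (x' - R • θ)) x - gradient w (x - R • θ)‖ ^ 2 +
            lam * (ξ x * w (x - R • θ) - w (x - R • θ)) ^ 2)) atTop (nhds 0) :=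
  stmt4_general N hN lam hlam w hw σ ρ₀ hσ hρ₀ hwdecay ρ ξ hξ hξ01 hξ1 θ hθ
end

section
/- Let N ≥ 2 and λ > 0. Assume w : ℝ^N → ℝ is continuous, positive, radially symmetric, and satisfies lim_{|x|→∞} w(x)|x|^{(N−1)/2} e^{√λ|x|} = σ for some σ > 0. Assume f : ℝ → ℝ is continuous, f(t) = 0 for t ≤ 0, and |f(t)| ≤ D(|t|^{p₁} + |t|^{p₂}) for all t, where D > 0 and 1 < p₁ ≤ p₂; set F(t) := ∫₀^t f(s) ds. Assume ξ : ℝ^N → [0,1] is a C¹ function with ξ ≡ 0 on the ball B_ρ(0) and ξ ≡ 1 on ℝ^N \ B_{2ρ}(0), for some ρ > 0; for θ ∈ ℝ^N and R > 0 set Φ^{Rθ}(x) := ξ(x) w(x − Rθ). Then for every θ with |θ| ≥ 1 there is a function η : (0,∞) → [0,∞) with η(R) → 0 as R → ∞ such that for every τ ≥ 0 and every R > 0: |∫_{ℝ^N} ( F(τ Φ^{Rθ}(x)) − F(τ w(x − Rθ)) ) dx| ≤ (τ^{p₁+1} + τ^{p₂+1}) η(R) R^{−(N−1)/2} e^{−2R√λ}.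 -/
open MeasureTheory Filter Metric Topology Interval

/-!
Since `ξ = 1` off `B_{2ρ}`, the integrand vanishes outside that ball, and on it the growth
bound `|F t| ≤ D (t^{p₁+1} + t^{p₂+1})` bounds the integrand by `2D (τ^{p₁+1} + τ^{p₂+1}) u(R)`,
where `u(R) = M^{p₁+1} + M^{p₂+1}` and `M` is the maximum of `w(· - Rθ)` over the ball.
The decay of `w` gives `M ≲ e^{-√λ R}`, so `u(R) ≲ e^{-(p₁+1)√λ R}`; as `p₁ + 1 > 2`,
`η(R) ∝ u(R) R^{(N-1)/2} e^{2√λ R}` still tends to `0`.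
-/

section Primitive

variable {f : ℝ → ℝ} {D p₁ p₂ : ℝ}

theorem abs_integral_zero_le_rpow_add_rpow (hD : 0 ≤ D) (hp₁ : 0 ≤ p₁) (hp₂ : 0 ≤ p₂)
    (hf : ∀ t, |f t| ≤ D * (|t| ^ p₁ + |t| ^ p₂)) {t : ℝ} (ht : 0 ≤ t) :
    |∫ s in (0:ℝ)..t, f s| ≤ D * (t ^ (p₁ + 1) + t ^ (p₂ + 1)) := by
  have hbound : ∀ s ∈ Ι 0 t, ‖f s‖ ≤ D * (t ^ p₁ + t ^ p₂) := by
    intro s hs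
    rw [Set.uIoc_of_le ht] at hs
    have hs' : |s| ≤ t := abs_le.mpr ⟨by linarith [hs.1], hs.2⟩
    calc ‖f s‖ ≤ D * (|s| ^ p₁ + |s| ^ p₂) := hf s
      _ ≤ D * (t ^ p₁ + t ^ p₂) := by gcongr
  calc |∫ s in (0:ℝ)..t, f s| ≤ D * (t ^ p₁ + t ^ p₂) * |t - 0| :=
        intervalIntegral.norm_integral_le_of_norm_le_const hbound
    _ = D * (t ^ (p₁ + 1) + t ^ (p₂ + 1)) := by
        rw [sub_zero, abs_of_nonneg ht, Real.rpow_add_one' ht (by linarith),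
          Real.rpow_add_one' ht (by linarith)]
        ring

theorem abs_integral_zero_le_of_le_mul (hD : 0 ≤ D) (hp₁ : 0 ≤ p₁) (hp₂ : 0 ≤ p₂)
    (hf : ∀ t, |f t| ≤ D * (|t| ^ p₁ + |t| ^ p₂)) {t τ M : ℝ} (ht : 0 ≤ t) (htM : t ≤ τ * M)
    (hτ : 0 ≤ τ) (hM : 0 ≤ M) :
    |∫ s in (0:ℝ)..t, f s| ≤
      D * ((τ ^ (p₁ + 1) + τ ^ (p₂ + 1)) * (M ^ (p₁ + 1) + M ^ (p₂ + 1))) := by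
  have hpow : ∀ p : ℝ, 0 ≤ p → t ^ (p + 1) ≤ τ ^ (p + 1) * M ^ (p + 1) := fun p hp => by
    rw [← Real.mul_rpow hτ hM]
    exact Real.rpow_le_rpow ht htM (by linarith)
  have hcross : 0 ≤ τ ^ (p₁ + 1) * M ^ (p₂ + 1) + τ ^ (p₂ + 1) * M ^ (p₁ + 1) := by positivity
  calc |∫ s in (0:ℝ)..t, f s| ≤ D * (t ^ (p₁ + 1) + t ^ (p₂ + 1)) :=
        abs_integral_zero_le_rpow_add_rpow hD hp₁ hp₂ hf ht
    _ ≤ D * (τ ^ (p₁ + 1) * M ^ (p₁ + 1) + τ ^ (p₂ + 1) * M ^ (p₂ + 1)) := by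
        gcongr <;> exact hpow _ ‹_›
    _ ≤ _ := by
        gcongr
        linear_combination hcross

theorem abs_primitive_sub_le {F : ℝ → ℝ} (hF : ∀ t, F t = ∫ s in (0:ℝ)..t, f s)
    (hD : 0 ≤ D) (hp₁ : 0 ≤ p₁) (hp₂ : 0 ≤ p₂)
    (hf : ∀ t, |f t| ≤ D * (|t| ^ p₁ + |t| ^ p₂)) {τ s y M : ℝ} (hτ : 0 ≤ τ)
    (hs : s ∈ Set.Icc (0:ℝ) 1) (hy : 0 ≤ y) (hyM : y ≤ M) :
    |F (τ * (s * y)) - F (τ * y)| ≤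
      2 * D * ((τ ^ (p₁ + 1) + τ ^ (p₂ + 1)) * (M ^ (p₁ + 1) + M ^ (p₂ + 1))) := by
  have hsy : s * y ≤ y := mul_le_of_le_one_left hy hs.2
  have hM : 0 ≤ M := hy.trans hyM
  have hle : ∀ t, 0 ≤ t → t ≤ τ * y → |F t| ≤
      D * ((τ ^ (p₁ + 1) + τ ^ (p₂ + 1)) * (M ^ (p₁ + 1) + M ^ (p₂ + 1))) := fun t ht hty => by
    rw [hF]
    exact abs_integral_zero_le_of_le_mul hD hp₁ hp₂ hf ht
      (hty.trans (mul_le_mul_of_nonneg_left hyM hτ)) hτ hM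
  calc |F (τ * (s * y)) - F (τ * y)| ≤ |F (τ * (s * y))| + |F (τ * y)| := abs_sub _ _
    _ ≤ _ := by
      linarith [hle _ (by have := hs.1; positivity) (mul_le_mul_of_nonneg_left hsy hτ),
        hle _ (by positivity) le_rfl]

end Primitive

section Decay

variable {E : Type*} [NormedAddCommGroup E]

theorem exists_le_mul_exp_neg_of_tendsto {w : E → ℝ} {α c σ : ℝ} (hα : 0 ≤ α)
    (hw : ∀ x, 0 ≤ w x)
    (hlim : Tendsto (fun x => w x * ‖x‖ ^ α * Real.exp (c * ‖x‖))
      (comap (fun x => ‖x‖) atTop) (𝓝 σ)) :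
    ∃ B r, 0 ≤ B ∧ ∀ x, r ≤ ‖x‖ → w x ≤ B * Real.exp (-(c * ‖x‖)) := by
  obtain ⟨r, hr⟩ := eventually_atTop.mp <| eventually_comap.mp <|
    hlim.eventually (eventually_lt_nhds (lt_add_one σ))
  refine ⟨max (σ + 1) 0, max r 1, le_max_right _ _, fun x hx => ?_⟩
  have hx1 : 1 ≤ ‖x‖ ^ α := Real.one_le_rpow ((le_max_right _ _).trans hx) hα
  have hlt := hr ‖x‖ ((le_max_left _ _).trans hx) x rfl
  have hexp : w x * Real.exp (c * ‖x‖) ≤ max (σ + 1) 0 := by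
    have := mul_le_mul_of_nonneg_left hx1 (mul_nonneg (hw x) (Real.exp_pos (c * ‖x‖)).le)
    nlinarith [le_max_left (σ + 1) 0]
  rw [Real.exp_neg, ← div_eq_mul_inv, le_div_iff₀ (Real.exp_pos _)]
  exact hexp

variable [NormedSpace ℝ E]

theorem sSup_image_sub_smul_le {w : E → ℝ} {B c r₀ r R : ℝ} {θ : E} (hB : 0 ≤ B) (hc : 0 ≤ c)
    (hθ : 1 ≤ ‖θ‖) (hw : ∀ y, r₀ ≤ ‖y‖ → w y ≤ B * Real.exp (-(c * ‖y‖)))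
    (hR : r₀ + r ≤ R) :
    sSup ((fun x => w (x - R • θ)) '' closedBall 0 r) ≤
      B * Real.exp (c * r) * Real.exp (-(c * R)) := by
  refine Real.sSup_le (Set.forall_mem_image.2 fun x hx => ?_) (by positivity)
  have hx : ‖x‖ ≤ r := mem_closedBall_zero_iff.mp hx
  have hRθ : R ≤ ‖R • θ‖ := by
    rw [norm_smul, Real.norm_eq_abs]
    nlinarith [le_abs_self R, abs_nonneg R]
  have hdist : R - r ≤ ‖x - R • θ‖ := by
    have := norm_sub_norm_le (R • θ) x
    rw [norm_sub_rev] at this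
    linarith
  calc w (x - R • θ) ≤ B * Real.exp (-(c * ‖x - R • θ‖)) := hw _ (by linarith)
    _ ≤ B * Real.exp (-(c * (R - r))) := by gcongr
    _ = B * Real.exp (c * r) * Real.exp (-(c * R)) := by
        rw [mul_assoc, ← Real.exp_add]
        ring_nf

end Decay

theorem rpow_le_rpow_mul_exp_neg {m C x p q : ℝ} (hm : 0 ≤ m) (hmC : m ≤ C * Real.exp (-x))
    (hC : 0 ≤ C) (hx : 0 ≤ x) (hp : 0 ≤ p) (hpq : p ≤ q) :
    m ^ q ≤ C ^ q * Real.exp (-(p * x)) :=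
  calc m ^ q ≤ (C * Real.exp (-x)) ^ q := Real.rpow_le_rpow hm hmC (hp.trans hpq)
    _ = C ^ q * Real.exp (-(q * x)) := by
        rw [Real.mul_rpow hC (Real.exp_pos _).le, ← Real.exp_mul]
        ring_nf
    _ ≤ C ^ q * Real.exp (-(p * x)) := by gcongr

theorem eventually_rpow_add_rpow_le_exp_neg {m : ℝ → ℝ} {C c p q : ℝ} (hm : ∀ R, 0 ≤ m R)
    (hmC : ∀ᶠ R in atTop, m R ≤ C * Real.exp (-(c * R))) (hC : 0 ≤ C) (hc : 0 ≤ c)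
    (hp : 0 ≤ p) (hpq : p ≤ q) :
    ∀ᶠ R in atTop, m R ^ p + m R ^ q ≤ (C ^ p + C ^ q) * Real.exp (-(p * c * R)) := by
  filter_upwards [hmC, eventually_ge_atTop 0] with R hR hR0
  have hcR : 0 ≤ c * R := mul_nonneg hc hR0
  have hmp := rpow_le_rpow_mul_exp_neg (hm R) hR hC hcR hp le_rfl
  have hmq := rpow_le_rpow_mul_exp_neg (hm R) hR hC hcR hp hpq
  rw [← mul_assoc] at hmp hmq
  linarith

theorem tendsto_mul_abs_rpow_mul_exp_of_le_exp_neg {u : ℝ → ℝ} {C a b α : ℝ} (hab : a < b)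
    (hu0 : ∀ R, 0 ≤ u R) (hu : ∀ᶠ R in atTop, u R ≤ C * Real.exp (-(b * R))) :
    Tendsto (fun R => u R * |R| ^ α * Real.exp (a * |R|)) atTop (𝓝 0) := by
  have hlim : Tendsto (fun R => C * (R ^ α * Real.exp (-(b - a) * R))) atTop (𝓝 0) := by
    simpa using (tendsto_rpow_mul_exp_neg_mul_atTop_nhds_zero α (b - a) (by linarith)).const_mul C
  refine squeeze_zero' (.of_forall fun R => by have := hu0 R; positivity) ?_ hlim
  filter_upwards [hu, eventually_ge_atTop 0] with R hR hR0
  rw [abs_of_nonneg hR0]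
  calc u R * R ^ α * Real.exp (a * R)
      ≤ C * Real.exp (-(b * R)) * R ^ α * Real.exp (a * R) := by gcongr
    _ = C * (R ^ α * Real.exp (-(b - a) * R)) := by
      rw [show -(b - a) * R = -(b * R) + a * R by ring, Real.exp_add]
      ring

theorem abs_integral_le_of_forall_compl_eq_zero {X : Type*} [MeasurableSpace X] {μ : Measure X}
    {g : X → ℝ} {s : Set X} {C : ℝ} (hs : μ s < ⊤) (hzero : ∀ x ∉ s, g x = 0)
    (hC : ∀ x ∈ s, |g x| ≤ C) :
    |∫ x, g x ∂μ| ≤ C * μ.real s := by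
  rw [← setIntegral_eq_integral_of_forall_compl_eq_zero hzero]
  exact norm_setIntegral_le_of_norm_le_const hs fun x hx =>
    (Real.norm_eq_abs _).trans_le (hC x hx)

theorem stmt5_general (N : ℕ) (hN : 2 ≤ N) (lam : ℝ) (hlam : 0 < lam)
    (w : EuclideanSpace ℝ (Fin N) → ℝ) (σ : ℝ)
    (hwcont : Continuous w) (hwpos : ∀ x, 0 < w x)
    (hwlim : Tendsto
      (fun x => w x * ‖x‖ ^ (((N : ℝ) - 1) / 2) * Real.exp (Real.sqrt lam * ‖x‖))
      (comap (fun x : EuclideanSpace ℝ (Fin N) => ‖x‖) atTop) (nhds σ))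
    (f : ℝ → ℝ) (D p₁ p₂ : ℝ) (hD : 0 < D) (hp₁ : 1 < p₁) (hp : p₁ ≤ p₂)
    (hfgrowth : ∀ t : ℝ, |f t| ≤ D * (|t| ^ p₁ + |t| ^ p₂))
    (F : ℝ → ℝ) (hF : ∀ t, F t = ∫ s in (0:ℝ)..t, f s)
    (ρ : ℝ)
    (ξ : EuclideanSpace ℝ (Fin N) → ℝ)
    (hξ01 : ∀ x, ξ x ∈ Set.Icc (0:ℝ) 1)
    (hξ1 : ∀ x ∉ Metric.ball (0 : EuclideanSpace ℝ (Fin N)) (2 * ρ), ξ x = 1)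
    (θ : EuclideanSpace ℝ (Fin N)) (hθ : 1 ≤ ‖θ‖) :
    ∃ η : ℝ → ℝ, (∀ R, 0 ≤ η R) ∧ Tendsto η atTop (nhds 0) ∧
      ∀ τ ≥ (0:ℝ), ∀ R > (0:ℝ),
        |∫ x, (F (τ * (ξ x * w (x - R • θ))) - F (τ * w (x - R • θ)))| ≤
          (τ ^ (p₁ + 1) + τ ^ (p₂ + 1)) * η R *
            R ^ (-(((N : ℝ) - 1) / 2)) * Real.exp (-(2 * R * Real.sqrt lam)) := by
  set α : ℝ := ((N : ℝ) - 1) / 2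
  have hα : 0 ≤ α := div_nonneg (by linarith [(Nat.ofNat_le_cast.mpr hN : (2 : ℝ) ≤ N)]) zero_le_two
  have hsqrt : 0 < Real.sqrt lam := Real.sqrt_pos.mpr hlam
  set K := closedBall (0 : EuclideanSpace ℝ (Fin N)) (2 * ρ)
  set M : ℝ → ℝ := fun R => sSup ((fun x => w (x - R • θ)) '' K)
  have hM0 : ∀ R, 0 ≤ M R := fun R =>
    Real.sSup_nonneg (Set.forall_mem_image.2 fun x _ => (hwpos _).le)
  have hwM : ∀ R, ∀ x ∈ K, w (x - R • θ) ≤ M R := fun R x hx =>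
    le_csSup ((isCompact_closedBall _ _).bddAbove_image (by fun_prop)) (Set.mem_image_of_mem _ hx)
  obtain ⟨B, r₀, hB, hdecay⟩ := exists_le_mul_exp_neg_of_tendsto hα (fun x => (hwpos x).le) hwlim
  have hMdecay := eventually_rpow_add_rpow_le_exp_neg hM0 (eventually_atTop.2 ⟨r₀ + 2 * ρ,
    fun R hR => sSup_image_sub_smul_le hB hsqrt.le hθ hdecay hR⟩) (by positivity) hsqrt.le
    (by linarith : 0 ≤ p₁ + 1) (by linarith : p₁ + 1 ≤ p₂ + 1)
  set u : ℝ → ℝ := fun R => M R ^ (p₁ + 1) + M R ^ (p₂ + 1)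
  have hu0 : ∀ R, 0 ≤ u R := fun R => by have := hM0 R; positivity
  -- `|R|` keeps `η` nonnegative for `R < 0`, where `rpow` of a negative base may be negative.
  refine ⟨fun R => 2 * D * volume.real K * (u R * |R| ^ α * Real.exp (2 * Real.sqrt lam * |R|)),
    fun R => by have := hu0 R; positivity, ?_, fun τ hτ R hR => ?_⟩
  · simpa using (tendsto_mul_abs_rpow_mul_exp_of_le_exp_neg (α := α)
      (by nlinarith : 2 * Real.sqrt lam < (p₁ + 1) * Real.sqrt lam) hu0 hMdecay).const_mul
      (2 * D * volume.real K)
  · refine (abs_integral_le_of_forall_compl_eq_zero measure_closedBall_lt_top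
      (fun x hx => by rw [hξ1 x fun h => hx (ball_subset_closedBall h), one_mul, sub_self])
      (fun x hx => abs_primitive_sub_le hF hD.le (by linarith) (by linarith) hfgrowth hτ
        (hξ01 x) (hwpos _).le (hwM R x hx))).trans_eq ?_
    dsimp only [u, K]
    rw [abs_of_pos hR, Real.rpow_neg hR.le, Real.exp_neg]
    field_simp

theorem stmt5 (N : ℕ) (hN : 2 ≤ N) (lam : ℝ) (hlam : 0 < lam)
    (w : EuclideanSpace ℝ (Fin N) → ℝ) (σ : ℝ) (hσ : 0 < σ)
    (hwcont : Continuous w) (hwpos : ∀ x, 0 < w x)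
    (hwrad : ∀ x y : EuclideanSpace ℝ (Fin N), ‖x‖ = ‖y‖ → w x = w y)
    (hwlim : Tendsto
      (fun x => w x * ‖x‖ ^ (((N : ℝ) - 1) / 2) * Real.exp (Real.sqrt lam * ‖x‖))
      (comap (fun x : EuclideanSpace ℝ (Fin N) => ‖x‖) atTop) (nhds σ))
    (f : ℝ → ℝ) (D p₁ p₂ : ℝ) (hD : 0 < D) (hp₁ : 1 < p₁) (hp : p₁ ≤ p₂)
    (hfcont : Continuous f) (hf0 : ∀ t ≤ (0:ℝ), f t = 0)
    (hfgrowth : ∀ t : ℝ, |f t| ≤ D * (|t| ^ p₁ + |t| ^ p₂))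
    (F : ℝ → ℝ) (hF : ∀ t, F t = ∫ s in (0:ℝ)..t, f s)
    (ρ : ℝ) (hρ : 0 < ρ)
    (ξ : EuclideanSpace ℝ (Fin N) → ℝ) (hξ : ContDiff ℝ 1 ξ)
    (hξ01 : ∀ x, ξ x ∈ Set.Icc (0:ℝ) 1)
    (hξ0 : ∀ x ∈ Metric.ball (0 : EuclideanSpace ℝ (Fin N)) ρ, ξ x = 0)
    (hξ1 : ∀ x ∉ Metric.ball (0 : EuclideanSpace ℝ (Fin N)) (2 * ρ), ξ x = 1)
    (θ : EuclideanSpace ℝ (Fin N)) (hθ : 1 ≤ ‖θ‖) :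
    ∃ η : ℝ → ℝ, (∀ R, 0 ≤ η R) ∧ Tendsto η atTop (nhds 0) ∧
      ∀ τ ≥ (0:ℝ), ∀ R > (0:ℝ),
        |∫ x, (F (τ * (ξ x * w (x - R • θ))) - F (τ * w (x - R • θ)))| ≤
          (τ ^ (p₁ + 1) + τ ^ (p₂ + 1)) * η R *
            R ^ (-(((N : ℝ) - 1) / 2)) * Real.exp (-(2 * R * Real.sqrt lam)) :=
  stmt5_general N hN lam hlam w σ hwcont hwpos hwlim f D p₁ p₂ hD hp₁ hp hfgrowth F hF ρ ξ hξ01 hξ1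
    θ hθ
end

section
/- Let N ≥ 2 and λ > 0. Assume w : ℝ^N → ℝ is continuous, positive, radially symmetric, and satisfies lim_{|x|→∞} w(x)|x|^{(N−1)/2} e^{√λ|x|} = σ for some σ > 0. Let f, F : ℝ → ℝ with f(0) = F(0) = 0, and suppose there exist K ≥ 0 and α with 2α > 1 such that |F(a+b) − F(a) − F(b) − f(a)b − f(b)a| ≤ K (ab)^{2α} for all a, b ≥ 0. Assume ξ : ℝ^N → [0,1] is a C¹ function with ξ ≡ 0 on the ball B_ρ(0) and ξ ≡ 1 on ℝ^N \ B_{2ρ}(0), for some ρ > 0; for θ ∈ ℝ^N and R > 0 set Φ^{Rθ}(x) := ξ(x) w(x − Rθ). Let x₀, y ∈ ℝ^N with |x₀| = 1 and |y − x₀| = 2, and let L > 0. Then lim_{R→∞} R^{(N−1)/2} e^{2R√λ} · sup_{t₁, t₂ ∈ [0,L]} | ∫_{ℝ^N} ( F(t₁ Φ^{Ry} + t₂ Φ^{Rx₀}) − F(t₁ Φ^{Ry}) − F(t₂ Φ^{Rx₀}) − f(t₁ Φ^{Ry}) t₂ Φ^{Rx₀} − f(t₂ Φ^{Rx₀}) t₁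 Φ^{Ry} ) dx | = 0. -/
open MeasureTheory Filter Metric

lemma aux_integrable_exp_norm (N : ℕ) (γ : ℝ) (hγ : 0 < γ) :
    Integrable (fun x : EuclideanSpace ℝ (Fin N) => Real.exp (-(γ * ‖x‖))) := by
  set r : ℝ := (N : ℝ) + 1 with hr'
  have hr : (Module.finrank ℝ (EuclideanSpace ℝ (Fin N)) : ℝ) < r := by
    simp [hr', finrank_euclideanSpace_fin]
  obtain ⟨T, hT⟩ : ∃ T : ℝ, ∀ s : ℝ, T ≤ s → s ^ r * Real.exp (-γ * s) ≤ 1 :=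
    eventually_atTop.mp <|
      (tendsto_rpow_mul_exp_neg_mul_atTop_nhds_zero r γ hγ).eventually_le_const zero_lt_one
  set T' : ℝ := max T 1 with hT'
  set C : ℝ := max (Real.exp γ) (T' ^ r) with hCdef
  have hbd : ∀ s : ℝ, 0 ≤ s → (1 + s) ^ r * Real.exp (-(γ * s)) ≤ C := by
    intro s hs
    rcases le_or_gt T (1 + s) with h | h
    · have h1 := hT (1 + s) h
      have he : Real.exp (-(γ * s)) = Real.exp γ * Real.exp (-γ * (1 + s)) := by
        rw [← Real.exp_add]; congr 1; ring
      rw [show (1 + s) ^ r * Real.exp (-(γ * s)) =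
          Real.exp γ * ((1 + s) ^ r * Real.exp (-γ * (1 + s))) by rw [he]; ring]
      calc Real.exp γ * ((1 + s) ^ r * Real.exp (-γ * (1 + s)))
          ≤ Real.exp γ * 1 := by
            exact mul_le_mul_of_nonneg_left h1 (Real.exp_pos γ).le
        _ ≤ C := by rw [mul_one]; exact le_max_left _ _
    · have h1 : (1 + s) ^ r ≤ T' ^ r := by
        apply Real.rpow_le_rpow (by linarith) (le_trans h.le (le_max_left _ _))
        positivity
      have h2 : Real.exp (-(γ * s)) ≤ 1 := by
        rw [Real.exp_le_one_iff]
        nlinarith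
      calc (1 + s) ^ r * Real.exp (-(γ * s)) ≤ T' ^ r * 1 := by
            apply mul_le_mul h1 h2 (Real.exp_pos _).le
            positivity
        _ ≤ C := by rw [mul_one]; exact le_max_right _ _
  have hC0 : 0 < C := lt_of_lt_of_le (Real.exp_pos γ) (le_max_left _ _)
  refine Integrable.mono' ((integrable_one_add_norm (μ := volume) hr).const_mul C)
    ?_ (Filter.Eventually.of_forall fun x => ?_)
  · exact (Real.continuous_exp.comp ((continuous_const.mul continuous_norm).neg)).aestronglyMeasurable
  · rw [Real.norm_eq_abs, abs_of_pos (Real.exp_pos _), Real.rpow_neg (by positivity),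
      ← div_eq_mul_inv, le_div_iff₀ (by positivity)]
    rw [mul_comm]
    exact hbd ‖x‖ (norm_nonneg x)

set_option maxHeartbeats 2000000 in
theorem stmt7 (N : ℕ) (hN : 2 ≤ N) (lam : ℝ) (hlam : 0 < lam)
    (w : EuclideanSpace ℝ (Fin N) → ℝ) (σ : ℝ) (hσ : 0 < σ)
    (hwcont : Continuous w) (hwpos : ∀ x, 0 < w x)
    (hwrad : ∀ x y : EuclideanSpace ℝ (Fin N), ‖x‖ = ‖y‖ → w x = w y)
    (hwlim : Tendsto
      (fun x => w x * ‖x‖ ^ (((N : ℝ) - 1) / 2) * Real.exp (Real.sqrt lam * ‖x‖))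
      (comap (fun x : EuclideanSpace ℝ (Fin N) => ‖x‖) atTop) (nhds σ))
    (f F : ℝ → ℝ) (hf0 : f 0 = 0) (hF0 : F 0 = 0)
    (K α : ℝ) (hK : 0 ≤ K) (hα : 1 < 2 * α)
    (hbound : ∀ a b : ℝ, 0 ≤ a → 0 ≤ b →
      |F (a + b) - F a - F b - f a * b - f b * a| ≤ K * (a * b) ^ (2 * α))
    (ρ : ℝ) (hρ : 0 < ρ)
    (ξ : EuclideanSpace ℝ (Fin N) → ℝ) (hξ : ContDiff ℝ 1 ξ)
    (hξ01 : ∀ x, ξ x ∈ Set.Icc (0:ℝ) 1)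
    (hξ0 : ∀ x ∈ Metric.ball (0 : EuclideanSpace ℝ (Fin N)) ρ, ξ x = 0)
    (hξ1 : ∀ x ∉ Metric.ball (0 : EuclideanSpace ℝ (Fin N)) (2 * ρ), ξ x = 1)
    (x₀ y : EuclideanSpace ℝ (Fin N)) (hx₀ : ‖x₀‖ = 1) (hy : ‖y - x₀‖ = 2)
    (L : ℝ) (hL : 0 < L) :
    Tendsto (fun R : ℝ =>
        R ^ (((N : ℝ) - 1) / 2) * Real.exp (2 * R * Real.sqrt lam) *
          ⨆ t : Set.Icc (0:ℝ) L × Set.Icc (0:ℝ) L,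
            |∫ x, (F ((t.1 : ℝ) * (ξ x * w (x - R • y)) + (t.2 : ℝ) * (ξ x * w (x - R • x₀)))
              - F ((t.1 : ℝ) * (ξ x * w (x - R • y)))
              - F ((t.2 : ℝ) * (ξ x * w (x - R • x₀)))
              - f ((t.1 : ℝ) * (ξ x * w (x - R • y))) * ((t.2 : ℝ) * (ξ x * w (x - R • x₀)))
              - f ((t.2 : ℝ) * (ξ x * w (x - R • x₀))) * ((t.1 : ℝ) * (ξ x * w (x - R • y))))|)
      atTop (nhds 0) := by
  set p : ℝ := ((N : ℝ) - 1) / 2 with hp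
  have hp0 : 0 ≤ p := by
    have : (2:ℝ) ≤ (N:ℝ) := by exact_mod_cast hN
    rw [hp]; linarith
  set sl : ℝ := Real.sqrt lam with hsl'
  have hsl : 0 < sl := Real.sqrt_pos.2 hlam
  set m : ℝ := 2 * α with hm'
  have hm1 : 1 < m := hα
  have hm0 : 0 < m := by linarith
  set γ : ℝ := (m - 1) / 2 * sl with hγ'
  have hγ : 0 < γ := mul_pos (by linarith) hsl
  -- bound on w
  obtain ⟨C, hC0, hC⟩ : ∃ C : ℝ, 0 < C ∧ ∀ z, w z ≤ C * Real.exp (-(sl * ‖z‖)) := by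
    have h1 : ∀ᶠ z in comap (fun x : EuclideanSpace ℝ (Fin N) => ‖x‖) atTop,
        w z * ‖z‖ ^ p * Real.exp (sl * ‖z‖) < σ + 1 :=
      hwlim.eventually_lt_const (lt_add_one σ)
    rw [eventually_comap] at h1
    obtain ⟨M, hM⟩ := eventually_atTop.mp h1
    set M' : ℝ := max M 1 with hM'
    have hfar : ∀ z : EuclideanSpace ℝ (Fin N), M' ≤ ‖z‖ →
        w z ≤ (σ + 1) * Real.exp (-(sl * ‖z‖)) := by
      intro z hz
      have h2 := hM ‖z‖ (le_trans (le_max_left M 1) hz) z rfl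
      have h3 : (1:ℝ) ≤ ‖z‖ ^ p := Real.one_le_rpow (le_trans (le_max_right M 1) hz) hp0
      have h4 : w z * Real.exp (sl * ‖z‖) ≤ σ + 1 := by
        nlinarith [mul_nonneg (hwpos z).le (Real.exp_pos (sl * ‖z‖)).le]
      rw [Real.exp_neg, ← div_eq_mul_inv, le_div_iff₀ (Real.exp_pos _)]
      exact h4
    obtain ⟨C₁, hC₁⟩ := (isCompact_closedBall (0 : EuclideanSpace ℝ (Fin N)) M').exists_bound_of_continuousOn
      hwcont.continuousOn
    have hC₁0 : 0 ≤ C₁ := le_trans (norm_nonneg (w 0))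
      (hC₁ 0 (mem_closedBall_self (by positivity)))
    refine ⟨max (σ + 1) (C₁ * Real.exp (sl * M')), lt_of_lt_of_le (by linarith) (le_max_left _ _), ?_⟩
    intro z
    rcases le_total M' ‖z‖ with h | h
    · exact le_trans (hfar z h)
        (mul_le_mul_of_nonneg_right (le_max_left _ _) (Real.exp_pos _).le)
    · have hz' : z ∈ Metric.closedBall (0 : EuclideanSpace ℝ (Fin N)) M' := by
        rwa [mem_closedBall_zero_iff]
      have h5 : w z ≤ C₁ := le_trans (le_abs_self _) (hC₁ z hz')
      have h6 : (1:ℝ) ≤ Real.exp (sl * M') * Real.exp (-(sl * ‖z‖)) := by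
        rw [← Real.exp_add]
        refine Real.one_le_exp ?_
        nlinarith [norm_nonneg z]
      calc w z ≤ C₁ * 1 := by linarith
        _ ≤ C₁ * (Real.exp (sl * M') * Real.exp (-(sl * ‖z‖))) :=
            mul_le_mul_of_nonneg_left h6 hC₁0
        _ = C₁ * Real.exp (sl * M') * Real.exp (-(sl * ‖z‖)) := by ring
        _ ≤ max (σ + 1) (C₁ * Real.exp (sl * M')) * Real.exp (-(sl * ‖z‖)) :=
            mul_le_mul_of_nonneg_right (le_max_right _ _) (Real.exp_pos _).le
  set I : ℝ := ∫ x : EuclideanSpace ℝ (Fin N), Real.exp (-(γ * ‖x‖)) with hI'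
  have hI : 0 ≤ I := integral_nonneg fun x => (Real.exp_pos _).le
  have hInt : Integrable (fun x : EuclideanSpace ℝ (Fin N) => Real.exp (-(γ * ‖x‖))) :=
    aux_integrable_exp_norm N γ hγ
  set Kc : ℝ := K * (L ^ 2 * C ^ 2) ^ m * I with hKc'
  have hKc0 : 0 ≤ Kc := by positivity
  apply squeeze_zero' (g := fun R : ℝ => Kc * (R ^ p * Real.exp (-((m - 1) * sl) * R)))
  · filter_upwards [eventually_ge_atTop (0:ℝ)] with R hR
    apply mul_nonneg (mul_nonneg (Real.rpow_nonneg hR p) (Real.exp_pos _).le)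
    exact Real.iSup_nonneg fun t => abs_nonneg _
  · filter_upwards [eventually_ge_atTop (0:ℝ)] with R hR
    have key : ∀ t : Set.Icc (0:ℝ) L × Set.Icc (0:ℝ) L,
        |∫ x, (F ((t.1 : ℝ) * (ξ x * w (x - R • y)) + (t.2 : ℝ) * (ξ x * w (x - R • x₀)))
              - F ((t.1 : ℝ) * (ξ x * w (x - R • y)))
              - F ((t.2 : ℝ) * (ξ x * w (x - R • x₀)))
              - f ((t.1 : ℝ) * (ξ x * w (x - R • y))) * ((t.2 : ℝ) * (ξ x * w (x - R • x₀)))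
              - f ((t.2 : ℝ) * (ξ x * w (x - R • x₀))) * ((t.1 : ℝ) * (ξ x * w (x - R • y))))|
          ≤ K * (L ^ 2 * C ^ 2) ^ m * Real.exp (-((m + 1) * sl) * R) * I := by
      intro t
      obtain ⟨ht₁0, ht₁L⟩ := t.1.2
      obtain ⟨ht₂0, ht₂L⟩ := t.2.2
      set c₁ : ℝ := K * (L ^ 2 * C ^ 2) ^ m * Real.exp (-((m + 1) * sl) * R) with hc₁'
      have hc₁0 : 0 ≤ c₁ := by positivity
      have hptw : ∀ x : EuclideanSpace ℝ (Fin N),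
          |(F ((t.1 : ℝ) * (ξ x * w (x - R • y)) + (t.2 : ℝ) * (ξ x * w (x - R • x₀)))
              - F ((t.1 : ℝ) * (ξ x * w (x - R • y)))
              - F ((t.2 : ℝ) * (ξ x * w (x - R • x₀)))
              - f ((t.1 : ℝ) * (ξ x * w (x - R • y))) * ((t.2 : ℝ) * (ξ x * w (x - R • x₀)))
              - f ((t.2 : ℝ) * (ξ x * w (x - R • x₀))) * ((t.1 : ℝ) * (ξ x * w (x - R • y))))|
            ≤ c₁ * Real.exp (-(γ * ‖x - R • x₀‖)) := by
        intro x
        obtain ⟨hξa, hξb⟩ := hξ01 x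
        set u : EuclideanSpace ℝ (Fin N) := x - R • y with hu'
        set v : EuclideanSpace ℝ (Fin N) := x - R • x₀ with hv'
        set a : ℝ := (t.1 : ℝ) * (ξ x * w u) with ha'
        set b : ℝ := (t.2 : ℝ) * (ξ x * w v) with hb'
        have ha0 : 0 ≤ a := mul_nonneg ht₁0 (mul_nonneg hξa (hwpos u).le)
        have hb0 : 0 ≤ b := mul_nonneg ht₂0 (mul_nonneg hξa (hwpos v).le)
        refine le_trans (hbound a b ha0 hb0) ?_
        have hea : a ≤ L * (C * Real.exp (-(sl * ‖u‖))) := by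
          calc a ≤ L * (ξ x * w u) :=
              mul_le_mul_of_nonneg_right ht₁L (mul_nonneg hξa (hwpos u).le)
            _ ≤ L * (1 * (C * Real.exp (-(sl * ‖u‖)))) :=
              mul_le_mul_of_nonneg_left
                (mul_le_mul hξb (hC u) (hwpos u).le zero_le_one) hL.le
            _ = L * (C * Real.exp (-(sl * ‖u‖))) := by ring
        have heb : b ≤ L * (C * Real.exp (-(sl * ‖v‖))) := by
          calc b ≤ L * (ξ x * w v) :=
              mul_le_mul_of_nonneg_right ht₂L (mul_nonneg hξa (hwpos v).le)
            _ ≤ L * (1 * (C * Real.exp (-(sl * ‖v‖)))) :=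
              mul_le_mul_of_nonneg_left
                (mul_le_mul hξb (hC v) (hwpos v).le zero_le_one) hL.le
            _ = L * (C * Real.exp (-(sl * ‖v‖))) := by ring
        have hab : a * b ≤ (L ^ 2 * C ^ 2) *
            (Real.exp (-(sl * ‖u‖)) * Real.exp (-(sl * ‖v‖))) := by
          calc a * b ≤ (L * (C * Real.exp (-(sl * ‖u‖)))) * (L * (C * Real.exp (-(sl * ‖v‖)))) :=
              mul_le_mul hea heb hb0 (by positivity)
            _ = (L ^ 2 * C ^ 2) * (Real.exp (-(sl * ‖u‖)) * Real.exp (-(sl * ‖v‖))) := by ring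
        have h2R : 2 * R ≤ ‖u‖ + ‖v‖ := by
          have huv : u - v = R • x₀ - R • y := by
            rw [hu', hv']; abel
          have hnorm : ‖u - v‖ = 2 * R := by
            rw [huv, ← smul_sub, norm_smul, Real.norm_eq_abs, abs_of_nonneg hR,
              norm_sub_rev, hy]
            ring
          calc 2 * R = ‖u - v‖ := hnorm.symm
            _ ≤ ‖u‖ + ‖v‖ := norm_sub_le u v
        have hexp : (Real.exp (-(sl * ‖u‖)) * Real.exp (-(sl * ‖v‖))) ^ m
            ≤ Real.exp (-((m + 1) * sl) * R) * Real.exp (-(γ * ‖v‖)) := by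
          rw [← Real.exp_add, ← Real.exp_mul, ← Real.exp_add]
          apply Real.exp_le_exp.2
          rw [hγ']
          nlinarith [norm_nonneg u, norm_nonneg v,
            mul_nonneg (mul_nonneg (by linarith : (0:ℝ) ≤ (m + 1) / 2)
              (by linarith : (0:ℝ) ≤ ‖u‖ + ‖v‖ - 2 * R)) hsl.le,
            mul_nonneg (mul_nonneg (by linarith : (0:ℝ) ≤ (m - 1) / 2)
              (by nlinarith [norm_nonneg u] : (0:ℝ) ≤ ‖u‖ + ‖v‖ - ‖v‖)) hsl.le]
        calc K * (a * b) ^ m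
            ≤ K * (((L ^ 2 * C ^ 2) * (Real.exp (-(sl * ‖u‖)) * Real.exp (-(sl * ‖v‖)))) ^ m) :=
              mul_le_mul_of_nonneg_left
                (Real.rpow_le_rpow (mul_nonneg ha0 hb0) hab hm0.le) hK
          _ = K * ((L ^ 2 * C ^ 2) ^ m *
                (Real.exp (-(sl * ‖u‖)) * Real.exp (-(sl * ‖v‖))) ^ m) := by
              rw [Real.mul_rpow (by positivity) (by positivity)]
          _ ≤ K * ((L ^ 2 * C ^ 2) ^ m *
                (Real.exp (-((m + 1) * sl) * R) * Real.exp (-(γ * ‖v‖)))) := by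
              apply mul_le_mul_of_nonneg_left _ hK
              exact mul_le_mul_of_nonneg_left hexp (by positivity)
          _ = c₁ * Real.exp (-(γ * ‖v‖)) := by rw [hc₁']; ring
      calc |∫ x, (F ((t.1 : ℝ) * (ξ x * w (x - R • y)) + (t.2 : ℝ) * (ξ x * w (x - R • x₀)))
              - F ((t.1 : ℝ) * (ξ x * w (x - R • y)))
              - F ((t.2 : ℝ) * (ξ x * w (x - R • x₀)))
              - f ((t.1 : ℝ) * (ξ x * w (x - R • y))) * ((t.2 : ℝ) * (ξ x * w (x - R • x₀)))
              - f ((t.2 : ℝ) * (ξ x * w (x - R • x₀))) * ((t.1 : ℝ) * (ξ x * w (x - R • y))))|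
          ≤ ∫ x, |(F ((t.1 : ℝ) * (ξ x * w (x - R • y)) + (t.2 : ℝ) * (ξ x * w (x - R • x₀)))
              - F ((t.1 : ℝ) * (ξ x * w (x - R • y)))
              - F ((t.2 : ℝ) * (ξ x * w (x - R • x₀)))
              - f ((t.1 : ℝ) * (ξ x * w (x - R • y))) * ((t.2 : ℝ) * (ξ x * w (x - R • x₀)))
              - f ((t.2 : ℝ) * (ξ x * w (x - R • x₀))) * ((t.1 : ℝ) * (ξ x * w (x - R • y))))| := by
            rw [← Real.norm_eq_abs]
            exact le_trans (norm_integral_le_integral_norm _) (le_of_eq (by simp [Real.norm_eq_abs]))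
        _ ≤ ∫ x : EuclideanSpace ℝ (Fin N), c₁ * Real.exp (-(γ * ‖x - R • x₀‖)) :=
            integral_mono_of_nonneg (Filter.Eventually.of_forall fun x => abs_nonneg _)
              ((hInt.comp_sub_right (R • x₀)).const_mul c₁)
              (Filter.Eventually.of_forall fun x => hptw x)
        _ = c₁ * ∫ x : EuclideanSpace ℝ (Fin N), Real.exp (-(γ * ‖x - R • x₀‖)) :=
            integral_const_mul c₁ _
        _ = c₁ * I := by
            rw [hI', integral_sub_right_eq_self (fun x => Real.exp (-(γ * ‖x‖))) (R • x₀)]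
        _ = K * (L ^ 2 * C ^ 2) ^ m * Real.exp (-((m + 1) * sl) * R) * I := by rw [hc₁']
    have hsup : (⨆ t : Set.Icc (0:ℝ) L × Set.Icc (0:ℝ) L,
        |∫ x, (F ((t.1 : ℝ) * (ξ x * w (x - R • y)) + (t.2 : ℝ) * (ξ x * w (x - R • x₀)))
              - F ((t.1 : ℝ) * (ξ x * w (x - R • y)))
              - F ((t.2 : ℝ) * (ξ x * w (x - R • x₀)))
              - f ((t.1 : ℝ) * (ξ x * w (x - R • y))) * ((t.2 : ℝ) * (ξ x * w (x - R • x₀)))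
              - f ((t.2 : ℝ) * (ξ x * w (x - R • x₀))) * ((t.1 : ℝ) * (ξ x * w (x - R • y))))|)
          ≤ K * (L ^ 2 * C ^ 2) ^ m * Real.exp (-((m + 1) * sl) * R) * I :=
      Real.iSup_le key (by positivity)
    calc R ^ p * Real.exp (2 * R * sl) *
          (⨆ t : Set.Icc (0:ℝ) L × Set.Icc (0:ℝ) L,
            |∫ x, (F ((t.1 : ℝ) * (ξ x * w (x - R • y)) + (t.2 : ℝ) * (ξ x * w (x - R • x₀)))
              - F ((t.1 : ℝ) * (ξ x * w (x - R • y)))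
              - F ((t.2 : ℝ) * (ξ x * w (x - R • x₀)))
              - f ((t.1 : ℝ) * (ξ x * w (x - R • y))) * ((t.2 : ℝ) * (ξ x * w (x - R • x₀)))
              - f ((t.2 : ℝ) * (ξ x * w (x - R • x₀))) * ((t.1 : ℝ) * (ξ x * w (x - R • y))))|)
        ≤ R ^ p * Real.exp (2 * R * sl) *
            (K * (L ^ 2 * C ^ 2) ^ m * Real.exp (-((m + 1) * sl) * R) * I) := by
          apply mul_le_mul_of_nonneg_left hsup
          positivity
      _ = Kc * (R ^ p * Real.exp (-((m - 1) * sl) * R)) := by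
          have he : Real.exp (2 * R * sl) * Real.exp (-((m + 1) * sl) * R)
              = Real.exp (-((m - 1) * sl) * R) := by
            rw [← Real.exp_add]; congr 1; ring
          rw [hKc', ← he]; ring
  · have h := (tendsto_rpow_mul_exp_neg_mul_atTop_nhds_zero p ((m - 1) * sl)
      (mul_pos (by linarith) hsl)).const_mul Kc
    simpa using h
end

section
/- Let N ≥ 2 and λ > 0. Assume w : ℝ^N → ℝ is continuous, positive, radially symmetric with a nonincreasing radial profile, and satisfies lim_{|x|→∞} w(x)|x|^{(N−1)/2} e^{√λ|x|} = σ for some σ > 0. Assume f : ℝ → ℝ is continuous, f(t) = 0 for t ≤ 0, f(t) > 0 for t > 0, and t ↦ f(t)/t is nondecreasing on (0,∞). Let x₀, y ∈ ℝ^N with |x₀| = 1 and |y − x₀| = 2. Then for every δ > 0 there exist C > 0 and R₀ > 0 such that for all R ≥ R₀ and all τ₁, τ₂ ≥ δ: ∫_{ℝ^N} f(τ₁ w(x − Rx₀)) τ₂ w(x − Ry) dx ≥ C min{τ₁, τ₂} R^{−(N−1)/2} e^{−2R√λ}. -/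
open MeasureTheory Filter Metric Set Topology

/-! On the unit ball around `R • x₀` the first factor is at least `f (δ * φ 1) > 0`, because
`f t / t` nondecreasing and `f ≥ 0` make `f` nondecreasing on `(0, ∞)`; every point of that ball
lies within `2R + 1` of `R • y`, so the second factor is at least `τ₂ * φ (2R + 1)`, and the
asymptotics of `w` bound `φ (2R + 1)` below by a multiple of `R ^ (-(N-1)/2) * exp (-2R√λ)`.
The same asymptotics dominate `w` by `C * exp (-√λ ‖x‖)`, which makes the integrand integrable. -/

lemma one_add_pow_le_mul_exp (n : ℕ) {s t : ℝ} (hs : 0 < s) (ht : 0 ≤ t) :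
    (1 + t) ^ n ≤ n.factorial * Real.exp s / s ^ n * Real.exp (s * t) := by
  have h := Real.pow_div_factorial_le_exp (s * (1 + t)) (by positivity) n
  rw [div_le_iff₀ (by positivity), mul_pow, mul_add, mul_one, Real.exp_add] at h
  rw [div_mul_eq_mul_div, le_div_iff₀ (by positivity)]
  linarith

lemma monotoneOn_of_monotoneOn_div_self {f : ℝ → ℝ} (hf : ∀ t > 0, 0 ≤ f t)
    (h : MonotoneOn (fun t => f t / t) (Ioi 0)) : MonotoneOn f (Ioi 0) := by
  intro a (ha : 0 < a) b (hb : 0 < b) hab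
  calc f a = f a / a * a := by field_simp
    _ ≤ f b / b * a := mul_le_mul_of_nonneg_right (h ha hb hab) ha.le
    _ ≤ f b / b * b := mul_le_mul_of_nonneg_left hab (div_nonneg (hf b hb) hb.le)
    _ = f b := by field_simp

lemma exists_pos_eventually_mul_rpow_mul_exp_le {φ : ℝ → ℝ} {p s σ : ℝ} (hσ : 0 < σ)
    (hp : 0 ≤ p) (hφ : Tendsto (fun r => φ r * r ^ p * Real.exp (s * r)) atTop (𝓝 σ)) :
    ∃ κ > 0, ∀ᶠ R in atTop, κ * R ^ (-p) * Real.exp (-(2 * R * s)) ≤ φ (2 * R + 1) := by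
  refine ⟨σ / 2 * 3 ^ (-p) * Real.exp (-s), by positivity, ?_⟩
  have hlin : Tendsto (fun R : ℝ => 2 * R + 1) atTop atTop :=
    tendsto_atTop_add_const_right _ _ (tendsto_id.const_mul_atTop two_pos)
  filter_upwards [hlin.eventually (hφ.eventually (eventually_gt_nhds (half_lt_self hσ))),
    eventually_ge_atTop 1] with R hR hR1
  have hpos : 0 < 2 * R + 1 := by linarith
  have h3R : (3 : ℝ) ^ (-p) * R ^ (-p) ≤ (2 * R + 1) ^ (-p) := by
    rw [← Real.mul_rpow (by norm_num) (by linarith)]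
    exact Real.rpow_le_rpow_of_nonpos hpos (by linarith) (neg_nonpos.2 hp)
  have hexp : Real.exp (-s) * Real.exp (-(2 * R * s)) = Real.exp (-(s * (2 * R + 1))) := by
    rw [← Real.exp_add]; ring_nf
  calc σ / 2 * 3 ^ (-p) * Real.exp (-s) * R ^ (-p) * Real.exp (-(2 * R * s))
      = σ / 2 * (3 ^ (-p) * R ^ (-p)) * Real.exp (-(s * (2 * R + 1))) := by
        rw [← hexp]; ring
    _ ≤ σ / 2 * (2 * R + 1) ^ (-p) * Real.exp (-(s * (2 * R + 1))) := by gcongr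
    _ ≤ φ (2 * R + 1) := by
      rw [Real.rpow_neg hpos.le, Real.exp_neg, mul_assoc, ← mul_inv, ← div_eq_mul_inv,
        div_le_iff₀ (by positivity), ← mul_assoc]
      exact hR.le

lemma Integrable.comp_bounded_mul {X : Type*} [MeasurableSpace X] [TopologicalSpace X]
    [OpensMeasurableSpace X] {μ : Measure X} {g u : X → ℝ} {f : ℝ → ℝ} {M : ℝ}
    (hg : Integrable g μ) (hf : Continuous f) (hu : Continuous u) (hM : ∀ x, |u x| ≤ M) :
    Integrable (fun x => f (u x) * g x) μ := by
  obtain ⟨K, hK⟩ := (isCompact_Icc (a := -M) (b := M)).exists_bound_of_continuousOn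
    hf.continuousOn
  exact hg.bdd_mul (hf.comp hu).aestronglyMeasurable
    (Eventually.of_forall fun x => hK _ (abs_le.1 (hM x)))

section NormedGroup

variable {E : Type*} [NormedAddCommGroup E]

lemma le_apply_of_norm_le {w : E → ℝ} {φ : ℝ → ℝ} (hφrad : ∀ x, w x = φ ‖x‖)
    (hφanti : AntitoneOn φ (Ici 0)) {z : E} {r : ℝ} (h : ‖z‖ ≤ r) : φ r ≤ w z :=
  hφrad z ▸ hφanti (norm_nonneg z) ((norm_nonneg z).trans h) h

lemma apply_le_apply_zero {w : E → ℝ} {φ : ℝ → ℝ} (hφrad : ∀ x, w x = φ ‖x‖)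
    (hφanti : AntitoneOn φ (Ici 0)) (z : E) : w z ≤ w 0 :=
  (hφrad z).trans_le (le_apply_of_norm_le hφrad hφanti (by simp))

lemma exists_norm_le_mul_exp_neg_norm {w : E → ℝ} {M p s σ : ℝ} (hM : ∀ z, ‖w z‖ ≤ M)
    (hp : 0 ≤ p) (hs : 0 ≤ s)
    (hw : Tendsto (fun x => w x * ‖x‖ ^ p * Real.exp (s * ‖x‖)) (comap (‖·‖) atTop) (𝓝 σ)) :
    ∃ C, ∀ z, ‖w z‖ ≤ C * Real.exp (-(s * ‖z‖)) := by
  obtain ⟨A, hA⟩ : ∃ A, ∀ z : E, A ≤ ‖z‖ →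
      ‖w z * ‖z‖ ^ p * Real.exp (s * ‖z‖)‖ ≤ ‖σ‖ + 1 := by
    have h := hw.norm.eventually (eventually_le_nhds (lt_add_one ‖σ‖))
    rw [eventually_comap, eventually_atTop] at h
    obtain ⟨A, hA⟩ := h
    exact ⟨A, fun z hz => hA ‖z‖ hz z rfl⟩
  set B := max A 1
  refine ⟨max (M * Real.exp (s * B)) (‖σ‖ + 1), fun z => ?_⟩
  rcases le_or_gt ‖z‖ B with hz | hz
  · calc ‖w z‖ ≤ M := hM z
      _ ≤ M * Real.exp (s * B) * Real.exp (-(s * ‖z‖)) := by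
        rw [mul_assoc, ← Real.exp_add]
        refine le_mul_of_one_le_right ((norm_nonneg _).trans (hM z)) (Real.one_le_exp ?_)
        nlinarith
      _ ≤ _ := by gcongr; exact le_max_left _ _
  · have hz1 : 1 ≤ ‖z‖ ^ p := Real.one_le_rpow ((le_max_right A 1).trans hz.le) hp
    have hbound := hA z ((le_max_left A 1).trans hz.le)
    rw [norm_mul, norm_mul, Real.norm_of_nonneg (Real.exp_nonneg _),
      Real.norm_of_nonneg (Real.rpow_nonneg (norm_nonneg z) p)] at hbound
    calc ‖w z‖ ≤ ‖w z‖ * ‖z‖ ^ p := le_mul_of_one_le_right (norm_nonneg _) hz1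
      _ = ‖w z‖ * ‖z‖ ^ p * Real.exp (s * ‖z‖) * Real.exp (-(s * ‖z‖)) := by
        rw [mul_assoc _ (Real.exp _), ← Real.exp_add, add_neg_cancel, Real.exp_zero, mul_one]
      _ ≤ (‖σ‖ + 1) * Real.exp (-(s * ‖z‖)) := by gcongr
      _ ≤ _ := by gcongr; exact le_max_right _ _

lemma tendsto_atTop_of_tendsto_comap_norm [NormedSpace ℝ E] [Nontrivial E] {α : Type*}
    {G : ℝ → α} {l : Filter α} (h : Tendsto (fun x : E => G ‖x‖) (comap (‖·‖) atTop) l) :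
    Tendsto G atTop l := by
  obtain ⟨e, he⟩ := exists_norm_eq E zero_le_one
  have hnorm : ∀ r : ℝ, ‖r • e‖ = |r| := by simp [norm_smul, he]
  have hray : Tendsto (fun r : ℝ => r • e) atTop (comap (‖·‖) atTop) :=
    tendsto_comap_iff.2 (by simpa [Function.comp_def, hnorm] using tendsto_abs_atTop_atTop)
  refine (h.comp hray).congr' ?_
  filter_upwards [eventually_ge_atTop 0] with r hr
  simp [hnorm, abs_of_nonneg hr]

end NormedGroup

section AddHaar

variable {E : Type*} [NormedAddCommGroup E] [NormedSpace ℝ E] [FiniteDimensional ℝ E]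
  [MeasurableSpace E] [BorelSpace E] (μ : Measure E) [μ.IsAddHaarMeasure]

lemma integrable_exp_neg_mul_norm {s : ℝ} (hs : 0 < s) :
    Integrable (fun x : E => Real.exp (-(s * ‖x‖))) μ := by
  set n := Module.finrank ℝ E + 1
  have hn : (Module.finrank ℝ E : ℝ) < n := by simp [n]
  refine ((integrable_one_add_norm hn).const_mul (n.factorial * Real.exp s / s ^ n)).mono'
    (by fun_prop) (Eventually.of_forall fun x => ?_)
  have hx : 0 < 1 + ‖x‖ := by positivity
  rw [Real.norm_of_nonneg (Real.exp_nonneg _), Real.rpow_neg hx.le, Real.rpow_natCast,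
    ← div_eq_mul_inv, le_div_iff₀ (by positivity), Real.exp_neg, inv_mul_le_iff₀ (Real.exp_pos _)]
  linarith [one_add_pow_le_mul_exp n hs (norm_nonneg x)]

lemma integrable_of_tendsto_mul_rpow_mul_exp {w : E → ℝ} {M p s σ : ℝ}
    (hmeas : AEStronglyMeasurable w μ) (hM : ∀ z, ‖w z‖ ≤ M) (hp : 0 ≤ p) (hs : 0 < s)
    (hw : Tendsto (fun x => w x * ‖x‖ ^ p * Real.exp (s * ‖x‖)) (comap (‖·‖) atTop) (𝓝 σ)) :
    Integrable w μ := by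
  obtain ⟨C, hC⟩ := exists_norm_le_mul_exp_neg_norm hM hp hs.le hw
  exact ((integrable_exp_neg_mul_norm μ hs).const_mul C).mono' hmeas (Eventually.of_forall hC)

lemma mul_measureReal_ball_le_integral {g : E → ℝ} {a : E} {r c : ℝ} (hg : Integrable g μ)
    (hg0 : 0 ≤ g) (hc : ∀ x ∈ ball a r, c ≤ g x) : c * μ.real (ball 0 r) ≤ ∫ x, g x ∂μ := by
  have hball : μ (ball a r) = μ (ball 0 r) := μ.addHaar_ball_center a r
  calc c * μ.real (ball 0 r) = c * μ.real (ball a r) := by simp only [Measure.real, hball]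
    _ ≤ ∫ x in ball a r, g x ∂μ := setIntegral_ge_of_const_le_real measurableSet_ball
        (hball ▸ measure_ball_lt_top.ne) hc hg.integrableOn
    _ ≤ ∫ x, g x ∂μ := setIntegral_le_integral hg (Eventually.of_forall hg0)

lemma mul_measureReal_ball_le_integral_comp_mul {w : E → ℝ} {φ f : ℝ → ℝ}
    (hwcont : Continuous w) (hwpos : ∀ x, 0 < w x) (hφrad : ∀ x, w x = φ ‖x‖)
    (hφanti : AntitoneOn φ (Ici 0)) (hwint : Integrable w μ) (hφ1 : 0 < φ 1)
    (hfcont : Continuous f) (hf0 : ∀ t ≤ 0, f t = 0) (hfpos : ∀ t > 0, 0 < f t)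
    (hfdiv : MonotoneOn (fun t => f t / t) (Ioi 0)) {δ τ₁ τ₂ : ℝ} (hδ : 0 < δ) (hτ₁ : δ ≤ τ₁)
    (hτ₂ : 0 ≤ τ₂) (a b : E) :
    f (δ * φ 1) * (τ₂ * φ (‖a - b‖ + 1)) * μ.real (ball 0 1) ≤
      ∫ x, f (τ₁ * w (x - a)) * (τ₂ * w (x - b)) ∂μ := by
  have hfnn : ∀ t, 0 ≤ f t := fun t =>
    (le_or_gt t 0).elim (fun h => (hf0 t h).ge) fun h => (hfpos t h).le
  have hfmono := monotoneOn_of_monotoneOn_div_self (fun t ht => (hfpos t ht).le) hfdiv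
  have hτ₁0 : 0 < τ₁ := hδ.trans_le hτ₁
  have hint : Integrable (fun x => f (τ₁ * w (x - a)) * (τ₂ * w (x - b))) μ :=
    Integrable.comp_bounded_mul ((hwint.comp_sub_right b).const_mul τ₂) hfcont (by fun_prop)
      (M := τ₁ * w 0) fun x => by
        rw [abs_of_pos (mul_pos hτ₁0 (hwpos _))]
        exact mul_le_mul_of_nonneg_left (apply_le_apply_zero hφrad hφanti _) hτ₁0.le
  refine mul_measureReal_ball_le_integral μ hint
    (fun x => mul_nonneg (hfnn _) (mul_nonneg hτ₂ (hwpos _).le)) (a := a) fun x hx => ?_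
  rw [mem_ball, dist_eq_norm] at hx
  have hfar : ‖x - b‖ ≤ ‖a - b‖ + 1 := by
    calc ‖x - b‖ = ‖(x - a) + (a - b)‖ := by rw [sub_add_sub_cancel]
      _ ≤ ‖a - b‖ + 1 := (norm_add_le _ _).trans (by linarith)
  have hnear : δ * φ 1 ≤ τ₁ * w (x - a) :=
    mul_le_mul hτ₁ (le_apply_of_norm_le hφrad hφanti hx.le) hφ1.le hτ₁0.le
  have hpos : 0 < δ * φ 1 := mul_pos hδ hφ1
  calc f (δ * φ 1) * (τ₂ * φ (‖a - b‖ + 1)) ≤ f (δ * φ 1) * (τ₂ * w (x - b)) :=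
        mul_le_mul_of_nonneg_left (mul_le_mul_of_nonneg_left
          (le_apply_of_norm_le hφrad hφanti hfar) hτ₂) (hfnn _)
    _ ≤ f (τ₁ * w (x - a)) * (τ₂ * w (x - b)) :=
        mul_le_mul_of_nonneg_right (hfmono hpos (hpos.trans_le hnear) hnear)
          (mul_nonneg hτ₂ (hwpos _).le)

end AddHaar

theorem stmt8_general (N : ℕ) (hN : 2 ≤ N) (lam : ℝ) (hlam : 0 < lam)
    (w : EuclideanSpace ℝ (Fin N) → ℝ) (σ : ℝ) (hσ : 0 < σ)
    (hwcont : Continuous w) (hwpos : ∀ x, 0 < w x)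
    (φ : ℝ → ℝ) (hφrad : ∀ x, w x = φ ‖x‖) (hφanti : AntitoneOn φ (Set.Ici 0))
    (hwlim : Tendsto
      (fun x => w x * ‖x‖ ^ (((N : ℝ) - 1) / 2) * Real.exp (Real.sqrt lam * ‖x‖))
      (comap (fun x : EuclideanSpace ℝ (Fin N) => ‖x‖) atTop) (nhds σ))
    (f : ℝ → ℝ) (hfcont : Continuous f)
    (hf0 : ∀ t ≤ (0:ℝ), f t = 0) (hfpos : ∀ t > (0:ℝ), 0 < f t)
    (hfmono : MonotoneOn (fun t => f t / t) (Set.Ioi 0))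
    (x₀ y : EuclideanSpace ℝ (Fin N)) (hy : ‖y - x₀‖ = 2) :
    ∀ δ > (0:ℝ), ∃ C > (0:ℝ), ∃ R₀ > (0:ℝ), ∀ R ≥ R₀, ∀ τ₁ ≥ δ, ∀ τ₂ ≥ δ,
      C * min τ₁ τ₂ * R ^ (-(((N : ℝ) - 1) / 2)) * Real.exp (-(2 * R * Real.sqrt lam)) ≤
        ∫ x, f (τ₁ * w (x - R • x₀)) * (τ₂ * w (x - R • y)) := by
  intro δ hδ
  have : NeZero N := ⟨by omega⟩
  have hp : 0 ≤ ((N : ℝ) - 1) / 2 :=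
    div_nonneg (sub_nonneg.2 (Nat.one_le_cast.2 (by omega))) zero_le_two
  obtain ⟨e, he⟩ := exists_norm_eq (EuclideanSpace ℝ (Fin N)) zero_le_one
  have hφ1 : 0 < φ 1 := he ▸ hφrad e ▸ hwpos e
  have hwint : Integrable w := integrable_of_tendsto_mul_rpow_mul_exp volume
    hwcont.aestronglyMeasurable (fun z => (Real.norm_of_nonneg (hwpos z).le).trans_le
      (apply_le_apply_zero hφrad hφanti z)) hp (Real.sqrt_pos.2 hlam) hwlim
  simp_rw [hφrad] at hwlim
  obtain ⟨κ, hκ, hev⟩ := exists_pos_eventually_mul_rpow_mul_exp_le hσ hp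
    (tendsto_atTop_of_tendsto_comap_norm hwlim)
  obtain ⟨R₁, hR₁⟩ := eventually_atTop.1 hev
  set V := volume.real (ball (0 : EuclideanSpace ℝ (Fin N)) 1)
  have hV : 0 < V :=
    ENNReal.toReal_pos (measure_ball_pos volume 0 one_pos).ne' measure_ball_lt_top.ne
  have hc : 0 < f (δ * φ 1) := hfpos _ (mul_pos hδ hφ1)
  refine ⟨f (δ * φ 1) * κ * V, by positivity, max R₁ 1, by positivity,
    fun R hR τ₁ hτ₁ τ₂ hτ₂ => ?_⟩
  have hR0 : 0 < R := zero_lt_one.trans_le ((le_max_right R₁ 1).trans hR)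
  have hab : ‖R • x₀ - R • y‖ = 2 * R := by
    rw [← smul_sub, norm_smul, norm_sub_rev, hy, Real.norm_of_nonneg hR0.le, mul_comm]
  calc _ = f (δ * φ 1) * (min τ₁ τ₂ * (κ * R ^ (-(((N : ℝ) - 1) / 2)) *
        Real.exp (-(2 * R * Real.sqrt lam)))) * V := by ring
    _ ≤ f (δ * φ 1) * (τ₂ * φ (‖R • x₀ - R • y‖ + 1)) * V := by
      rw [hab]
      gcongr
      · linarith
      · exact min_le_right _ _
      · exact hR₁ R (le_of_max_le_left hR)
    _ ≤ _ := mul_measureReal_ball_le_integral_comp_mul volume hwcont hwpos hφrad hφanti hwint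
        hφ1 hfcont hf0 hfpos hfmono hδ hτ₁ (hδ.le.trans hτ₂) _ _

theorem stmt8 (N : ℕ) (hN : 2 ≤ N) (lam : ℝ) (hlam : 0 < lam)
    (w : EuclideanSpace ℝ (Fin N) → ℝ) (σ : ℝ) (hσ : 0 < σ)
    (hwcont : Continuous w) (hwpos : ∀ x, 0 < w x)
    (φ : ℝ → ℝ) (hφrad : ∀ x, w x = φ ‖x‖) (hφanti : AntitoneOn φ (Set.Ici 0))
    (hwlim : Tendsto
      (fun x => w x * ‖x‖ ^ (((N : ℝ) - 1) / 2) * Real.exp (Real.sqrt lam * ‖x‖))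
      (comap (fun x : EuclideanSpace ℝ (Fin N) => ‖x‖) atTop) (nhds σ))
    (f : ℝ → ℝ) (hfcont : Continuous f)
    (hf0 : ∀ t ≤ (0:ℝ), f t = 0) (hfpos : ∀ t > (0:ℝ), 0 < f t)
    (hfmono : MonotoneOn (fun t => f t / t) (Set.Ioi 0))
    (x₀ y : EuclideanSpace ℝ (Fin N)) (hx₀ : ‖x₀‖ = 1) (hy : ‖y - x₀‖ = 2) :
    ∀ δ > (0:ℝ), ∃ C > (0:ℝ), ∃ R₀ > (0:ℝ), ∀ R ≥ R₀, ∀ τ₁ ≥ δ, ∀ τ₂ ≥ δ,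
      C * min τ₁ τ₂ * R ^ (-(((N : ℝ) - 1) / 2)) * Real.exp (-(2 * R * Real.sqrt lam)) ≤
        ∫ x, f (τ₁ * w (x - R • x₀)) * (τ₂ * w (x - R • y)) :=
  stmt8_general N hN lam hlam w σ hσ hwcont hwpos φ hφrad hφanti hwlim f hfcont hf0 hfpos hfmono x₀
    y hy
end

section
/- Let N ≥ 2 and λ > 0. Assume w : ℝ^N → ℝ is continuous, positive, radially symmetric, and satisfies lim_{|x|→∞} w(x)|x|^{(N−1)/2} e^{√λ|x|} = σ for some σ > 0. Assume f : ℝ → ℝ is continuously differentiable on [0,∞) with f(t) = 0 for t ≤ 0, |f(t)| ≤ D(t^{p₁} + t^{p₂}) and |f'(t)| ≤ D(t^{p₁−1} + t^{p₂−1}) for all t ≥ 0, where D > 0 and 1 < p₁ ≤ p₂. Let x₀, y ∈ ℝ^N with |x₀| = 1 and |y − x₀| = 2. Then there exist C > 0 and R₀ > 0 such that for all R ≥ R₀ and all τ ≥ 0: | ∫_{ℝ^N} ( τ f(w(x − Rx₀)) − f(τ w(x − Rx₀)) ) w(x − Ry) dx | ≤ C |τ − 1| (1 + τ^{p₂−1})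 R^{−(N−1)/2} e^{−2R√λ}. -/
/-!
The map `τ ↦ τ f(s) - f(τ s)` vanishes at `τ = 1` and has derivative `f(s) - s f'(τ s)`, so the
mean value theorem and the growth bounds on `f` give
`|τ f(s) - f(τ s)| ≲ |τ - 1| (1 + τ^(p₂-1)) (s^p₁ + s^p₂)`.
Continuity of `w` and its asymptotics give `w z ≤ A max(1,|z|)^(-(N-1)/2) e^(-√λ |z|)`.
The centres `R x₀` and `R y` are `2R` apart, so `u = x - R x₀` and `v = x - R y` satisfy
`|u| + |v| ≥ 2R`; hence `max(1,|u|) max(1,|v|) ≥ R` and, for `p ≥ p₁`,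
`w(u)^p w(v) ≤ A^(p+1) R^(-(N-1)/2) e^(-2R√λ) e^(-(p₁-1)√λ |u|)`, whose last factor is integrable
in `x` because `p₁ > 1`.
-/

open MeasureTheory Filter Metric Set Topology Real

theorem rpow_sub_one_le_one_add_rpow {t τ q p : ℝ} (ht : 0 ≤ t) (htτ : t ≤ max τ 1)
    (hτ : 0 ≤ τ) (hq : 1 ≤ q) (hqp : q ≤ p) : t ^ (q - 1) ≤ 1 + τ ^ (p - 1) := by
  have hτp : 0 ≤ τ ^ (p - 1) := Real.rpow_nonneg hτ _
  rcases le_total τ 1 with hτ1 | hτ1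
  · have : t ^ (q - 1) ≤ 1 :=
      Real.rpow_le_one ht (htτ.trans (max_le hτ1 le_rfl)) (sub_nonneg.2 hq)
    linarith
  · have htτ' : t ≤ τ := htτ.trans (max_le le_rfl hτ1)
    have : t ^ (q - 1) ≤ τ ^ (p - 1) :=
      (Real.rpow_le_rpow ht htτ' (sub_nonneg.2 hq)).trans
        (Real.rpow_le_rpow_of_exponent_le hτ1 (by linarith))
    linarith

theorem mul_rpow_sub_one_mul {t s : ℝ} (ht : 0 ≤ t) (hs : 0 < s) (q : ℝ) :
    (t * s) ^ (q - 1) * s = t ^ (q - 1) * s ^ q := by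
  rw [Real.mul_rpow ht hs.le, Real.rpow_sub_one hs.ne', mul_assoc, div_mul_cancel₀ _ hs.ne']

theorem abs_sub_deriv_mul_le {f : ℝ → ℝ} {D p₁ p₂ : ℝ} (hD : 0 ≤ D) (hp₁ : 1 ≤ p₁) (hp : p₁ ≤ p₂)
    (hgrowth : ∀ t ≥ 0, |f t| ≤ D * (t ^ p₁ + t ^ p₂))
    (hderiv : ∀ t > 0, |deriv f t| ≤ D * (t ^ (p₁ - 1) + t ^ (p₂ - 1)))
    {s τ t : ℝ} (hs : 0 < s) (hτ : 0 ≤ τ) (ht : 0 < t) (htτ : t ≤ max τ 1) :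
    |f s - deriv f (t * s) * s| ≤ 2 * D * (1 + τ ^ (p₂ - 1)) * (s ^ p₁ + s ^ p₂) := by
  have hT : 1 ≤ 1 + τ ^ (p₂ - 1) := le_add_of_nonneg_right (Real.rpow_nonneg hτ _)
  have hfs : |f s| ≤ D * (1 + τ ^ (p₂ - 1)) * (s ^ p₁ + s ^ p₂) :=
    calc |f s| ≤ D * (s ^ p₁ + s ^ p₂) := hgrowth s hs.le
      _ ≤ D * (1 + τ ^ (p₂ - 1)) * (s ^ p₁ + s ^ p₂) := by
        rw [mul_right_comm]; exact le_mul_of_one_le_right (by positivity) hT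
  have hf's : |deriv f (t * s) * s| ≤ D * (1 + τ ^ (p₂ - 1)) * (s ^ p₁ + s ^ p₂) :=
    calc |deriv f (t * s) * s| = |deriv f (t * s)| * s := by rw [abs_mul, abs_of_pos hs]
      _ ≤ D * ((t * s) ^ (p₁ - 1) + (t * s) ^ (p₂ - 1)) * s := by
        gcongr; exact hderiv _ (mul_pos ht hs)
      _ = D * (t ^ (p₁ - 1) * s ^ p₁ + t ^ (p₂ - 1) * s ^ p₂) := by
        rw [← mul_rpow_sub_one_mul ht.le hs, ← mul_rpow_sub_one_mul ht.le hs]; ring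
      _ ≤ D * ((1 + τ ^ (p₂ - 1)) * s ^ p₁ + (1 + τ ^ (p₂ - 1)) * s ^ p₂) := by
        gcongr
        · exact rpow_sub_one_le_one_add_rpow ht.le htτ hτ hp₁ hp
        · exact rpow_sub_one_le_one_add_rpow ht.le htτ hτ (hp₁.trans hp) le_rfl
      _ = D * (1 + τ ^ (p₂ - 1)) * (s ^ p₁ + s ^ p₂) := by ring
  calc |f s - deriv f (t * s) * s| ≤ |f s| + |deriv f (t * s) * s| := abs_sub _ _
    _ ≤ 2 * D * (1 + τ ^ (p₂ - 1)) * (s ^ p₁ + s ^ p₂) := by linarith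

theorem abs_mul_sub_apply_mul_le {f : ℝ → ℝ} {D p₁ p₂ : ℝ} (hD : 0 ≤ D) (hp₁ : 1 ≤ p₁)
    (hp : p₁ ≤ p₂) (hf : DifferentiableOn ℝ f (Ioi 0)) (hf0 : f 0 = 0)
    (hgrowth : ∀ t ≥ 0, |f t| ≤ D * (t ^ p₁ + t ^ p₂))
    (hderiv : ∀ t > 0, |deriv f t| ≤ D * (t ^ (p₁ - 1) + t ^ (p₂ - 1)))
    {s τ : ℝ} (hs : 0 < s) (hτ : 0 ≤ τ) :
    |τ * f s - f (τ * s)| ≤ 2 * D * |τ - 1| * (1 + τ ^ (p₂ - 1)) * (s ^ p₁ + s ^ p₂) := by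
  rcases hτ.eq_or_lt with rfl | hτ
  · simp only [zero_mul, hf0, sub_zero, abs_zero]
    positivity
  set I := Icc (min τ 1) (max τ 1)
  have hI : ∀ t ∈ I, 0 < t := fun t ht => (lt_min hτ one_pos).trans_le ht.1
  have hg : ∀ t ∈ I, HasDerivWithinAt (fun t => t * f s - f (t * s))
      (f s - deriv f (t * s) * s) I t := by
    intro t ht
    have hft : DifferentiableAt ℝ f (t * s) :=
      hf.differentiableAt (Ioi_mem_nhds (mul_pos (hI t ht) hs))
    exact (((hasDerivAt_id t).mul_const (f s)).sub
      (hft.hasDerivAt.comp t ((hasDerivAt_id t).mul_const s))).hasDerivWithinAt.congr_deriv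
      (by simp)
  have hmvt := (convex_Icc _ _).norm_image_sub_le_of_norm_hasDerivWithin_le hg
    (fun t ht => abs_sub_deriv_mul_le hD hp₁ hp hgrowth hderiv hs hτ.le (hI t ht) ht.2)
    (⟨min_le_right _ _, le_max_right _ _⟩ : (1 : ℝ) ∈ I) ⟨min_le_left _ _, le_max_left _ _⟩
  simp only [one_mul, sub_self, sub_zero, Real.norm_eq_abs] at hmvt
  linarith

theorem exists_le_mul_rpow_mul_exp_of_tendsto {E : Type*} [NormedAddCommGroup E] [ProperSpace E]
    {w : E → ℝ} {α k σ : ℝ} (hw : Continuous w)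
    (hlim : Tendsto (fun x => w x * ‖x‖ ^ α * exp (k * ‖x‖)) (comap norm atTop) (𝓝 σ)) :
    ∃ A, ∀ x, w x ≤ A * max 1 ‖x‖ ^ (-α) * exp (-(k * ‖x‖)) := by
  set g := fun x => w x * max 1 ‖x‖ ^ α * exp (k * ‖x‖)
  have hg : Continuous g :=
    (hw.mul ((continuous_const.max continuous_norm).rpow_const fun x =>
      Or.inl (zero_lt_one.trans_le (le_max_left 1 ‖x‖)).ne')).mul (by fun_prop)
  have hglim : Tendsto g (cocompact E) (𝓝 σ) := by
    rw [← cobounded_eq_cocompact, ← comap_norm_atTop]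
    refine hlim.congr' ?_
    filter_upwards [tendsto_comap.eventually (eventually_ge_atTop 1)] with x hx
    simp only [g, max_eq_right hx]
  obtain ⟨A, hA⟩ :=
    ((Continuous.isBounded_range_iff_isBigO hg).2 (hglim.isBigO_one (F := ℝ))).bddAbove
  refine ⟨A, fun x => ?_⟩
  have hm : 0 < max 1 ‖x‖ := zero_lt_one.trans_le (le_max_left _ _)
  calc w x = g x * max 1 ‖x‖ ^ (-α) * exp (-(k * ‖x‖)) := by
        simp only [g, Real.rpow_neg hm.le, Real.exp_neg]
        field_simp
    _ ≤ A * max 1 ‖x‖ ^ (-α) * exp (-(k * ‖x‖)) := by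
        gcongr; exact hA (mem_range_self x)

theorem rpow_mul_le_of_le_mul_rpow_mul_exp {E : Type*} [SeminormedAddCommGroup E] {w : E → ℝ}
    {A α k p β R : ℝ} (hw0 : ∀ x, 0 ≤ w x)
    (hA : ∀ x, w x ≤ A * max 1 ‖x‖ ^ (-α) * exp (-(k * ‖x‖)))
    (hα : 0 ≤ α) (hk : 0 ≤ k) (hp : 1 ≤ p) (hβ : β ≤ (p - 1) * k) (hR : 0 < R) {u v : E}
    (huv : 2 * R ≤ ‖u‖ + ‖v‖) :
    w u ^ p * w v ≤ A ^ (p + 1) * R ^ (-α) * exp (-(2 * R * k)) * exp (-(β * ‖u‖)) := by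
  have hm : ∀ x : E, 1 ≤ max 1 ‖x‖ := fun x => le_max_left _ _
  have hA0 : 0 ≤ A := by
    refine nonneg_of_mul_nonneg_left ((hw0 u).trans ((hA u).trans_eq (mul_assoc _ _ _))) ?_
    exact mul_pos (Real.rpow_pos_of_pos (zero_lt_one.trans_le (hm u)) _) (Real.exp_pos _)
  have hpow : (max 1 ‖u‖ ^ (-α)) ^ p * max 1 ‖v‖ ^ (-α) ≤ R ^ (-α) :=
    calc (max 1 ‖u‖ ^ (-α)) ^ p * max 1 ‖v‖ ^ (-α)
        ≤ max 1 ‖u‖ ^ (-α) * max 1 ‖v‖ ^ (-α) := by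
          rw [← Real.rpow_mul (zero_le_one.trans (hm u))]
          gcongr
          · exact hm u
          · nlinarith
      _ = (max 1 ‖u‖ * max 1 ‖v‖) ^ (-α) :=
          (Real.mul_rpow (zero_le_one.trans (hm u)) (zero_le_one.trans (hm v))).symm
      _ ≤ R ^ (-α) := by
          refine Real.rpow_le_rpow_of_nonpos hR ?_ (neg_nonpos.2 hα)
          rcases le_total R ‖u‖ with h | h
          · nlinarith [le_max_right 1 ‖u‖, hm v]
          · nlinarith [le_max_right 1 ‖v‖, hm u]
  have hexp : exp (-(k * ‖u‖)) ^ p * exp (-(k * ‖v‖)) ≤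
      exp (-(2 * R * k)) * exp (-(β * ‖u‖)) := by
    rw [← Real.exp_mul, ← Real.exp_add, ← Real.exp_add, Real.exp_le_exp]
    nlinarith [mul_nonneg hk (sub_nonneg.2 huv), mul_nonneg (sub_nonneg.2 hβ) (norm_nonneg u)]
  calc w u ^ p * w v
      ≤ (A * max 1 ‖u‖ ^ (-α) * exp (-(k * ‖u‖))) ^ p *
          (A * max 1 ‖v‖ ^ (-α) * exp (-(k * ‖v‖))) :=
        mul_le_mul (Real.rpow_le_rpow (hw0 u) (hA u) (by linarith)) (hA v) (hw0 v)
          (by positivity)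
    _ = A ^ (p + 1) * ((max 1 ‖u‖ ^ (-α)) ^ p * max 1 ‖v‖ ^ (-α)) *
          (exp (-(k * ‖u‖)) ^ p * exp (-(k * ‖v‖))) := by
        rw [Real.mul_rpow (by positivity) (Real.exp_pos _).le, Real.mul_rpow hA0 (by positivity),
          Real.rpow_add_one' hA0 (by linarith)]
        ring
    _ ≤ A ^ (p + 1) * R ^ (-α) * (exp (-(2 * R * k)) * exp (-(β * ‖u‖))) := by
        gcongr
    _ = _ := by ring

theorem mul_norm_sub_le_norm_sub_smul_add {E : Type*} [SeminormedAddCommGroup E]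
    [NormedSpace ℝ E] {R : ℝ} (hR : 0 ≤ R) (x a b : E) :
    R * ‖b - a‖ ≤ ‖x - R • a‖ + ‖x - R • b‖ :=
  calc R * ‖b - a‖ = ‖(x - R • a) - (x - R • b)‖ := by
        rw [sub_sub_sub_cancel_left, ← smul_sub, norm_smul, Real.norm_of_nonneg hR]
    _ ≤ ‖x - R • a‖ + ‖x - R • b‖ := norm_sub_le _ _

theorem integrable_exp_neg_mul_norm_s9 {E : Type*} [NormedAddCommGroup E] [NormedSpace ℝ E]
    [FiniteDimensional ℝ E] [MeasurableSpace E] [BorelSpace E] (μ : Measure E)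
    [μ.IsAddHaarMeasure] {c : ℝ} (hc : 0 < c) :
    Integrable (fun x => exp (-(c * ‖x‖))) μ := by
  rcases subsingleton_or_nontrivial E with _ | _
  · exact Integrable.of_finite
  · rw [integrable_fun_norm_addHaar μ (f := fun t => exp (-(c * t)))]
    refine (integrableOn_rpow_mul_exp_neg_mul_rpow (s := (Module.finrank ℝ E - 1 : ℕ)) (p := 1)
      (neg_one_lt_zero.trans_le (Nat.cast_nonneg _)) one_pos hc).congr_fun
      (fun t _ => by simp) measurableSet_Ioi

theorem abs_mul_le_of_le_mul_rpow_mul_exp {E : Type*} [SeminormedAddCommGroup E] {w : E → ℝ}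
    {g : ℝ → ℝ} {A α k c p₁ p₂ R : ℝ} (hw : ∀ x, 0 < w x)
    (hA : ∀ x, w x ≤ A * max 1 ‖x‖ ^ (-α) * exp (-(k * ‖x‖))) (hα : 0 ≤ α) (hk : 0 ≤ k)
    (hp₁ : 1 ≤ p₁) (hp : p₁ ≤ p₂) (hc : 0 ≤ c) (hg : ∀ s > 0, |g s| ≤ c * (s ^ p₁ + s ^ p₂))
    (hR : 0 < R) {u v : E} (huv : 2 * R ≤ ‖u‖ + ‖v‖) :
    |g (w u) * w v| ≤ c * (A ^ (p₁ + 1) + A ^ (p₂ + 1)) * R ^ (-α) * exp (-(2 * R * k)) *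
      exp (-((p₁ - 1) * k * ‖u‖)) := by
  have hw0 : ∀ x, 0 ≤ w x := fun x => (hw x).le
  have h₁ := rpow_mul_le_of_le_mul_rpow_mul_exp hw0 hA hα hk hp₁ le_rfl hR huv
  have h₂ := rpow_mul_le_of_le_mul_rpow_mul_exp hw0 hA hα hk (hp₁.trans hp)
    (by gcongr : (p₁ - 1) * k ≤ (p₂ - 1) * k) hR huv
  calc |g (w u) * w v| = |g (w u)| * w v := by rw [abs_mul, abs_of_pos (hw v)]
    _ ≤ c * (w u ^ p₁ + w u ^ p₂) * w v := mul_le_mul_of_nonneg_right (hg _ (hw u)) (hw0 v)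
    _ = c * (w u ^ p₁ * w v + w u ^ p₂ * w v) := by ring
    _ ≤ c * (A ^ (p₁ + 1) * R ^ (-α) * exp (-(2 * R * k)) * exp (-((p₁ - 1) * k * ‖u‖)) +
          A ^ (p₂ + 1) * R ^ (-α) * exp (-(2 * R * k)) * exp (-((p₁ - 1) * k * ‖u‖))) := by
        gcongr
    _ = _ := by ring

theorem stmt9_general (N : ℕ) (hN : 2 ≤ N) (lam : ℝ) (hlam : 0 < lam)
    (w : EuclideanSpace ℝ (Fin N) → ℝ) (σ : ℝ)
    (hwcont : Continuous w) (hwpos : ∀ x, 0 < w x)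
    (hwlim : Tendsto
      (fun x => w x * ‖x‖ ^ (((N : ℝ) - 1) / 2) * Real.exp (Real.sqrt lam * ‖x‖))
      (comap (fun x : EuclideanSpace ℝ (Fin N) => ‖x‖) atTop) (nhds σ))
    (f : ℝ → ℝ) (D p₁ p₂ : ℝ) (hD : 0 < D) (hp₁ : 1 < p₁) (hp : p₁ ≤ p₂)
    (hfC1 : ContDiffOn ℝ 1 f (Set.Ici 0)) (hf0 : ∀ t ≤ (0:ℝ), f t = 0)
    (hfgrowth : ∀ t ≥ (0:ℝ), |f t| ≤ D * (t ^ p₁ + t ^ p₂))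
    (hfderiv : ∀ t ≥ (0:ℝ), |deriv f t| ≤ D * (t ^ (p₁ - 1) + t ^ (p₂ - 1)))
    (x₀ y : EuclideanSpace ℝ (Fin N)) (hy : ‖y - x₀‖ = 2) :
    ∃ C > (0:ℝ), ∃ R₀ > (0:ℝ), ∀ R ≥ R₀, ∀ τ ≥ (0:ℝ),
      |∫ x, (τ * f (w (x - R • x₀)) - f (τ * w (x - R • x₀))) * w (x - R • y)| ≤
        C * |τ - 1| * (1 + τ ^ (p₂ - 1)) *
          R ^ (-(((N : ℝ) - 1) / 2)) * Real.exp (-(2 * R * Real.sqrt lam)) := by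
  have hα : 0 ≤ ((N : ℝ) - 1) / 2 :=
    div_nonneg (sub_nonneg.2 (by exact_mod_cast (by omega : 1 ≤ N))) zero_le_two
  have hk : 0 < √lam := Real.sqrt_pos.2 hlam
  have hfdiff : DifferentiableOn ℝ f (Ioi 0) :=
    (hfC1.differentiableOn one_ne_zero).mono Ioi_subset_Ici_self
  obtain ⟨A, hA⟩ := exists_le_mul_rpow_mul_exp_of_tendsto hwcont hwlim
  have hint := integrable_exp_neg_mul_norm_s9 (volume : Measure (EuclideanSpace ℝ (Fin N)))
    (mul_pos (sub_pos.2 hp₁) hk)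
  set K := 2 * D * (A ^ (p₁ + 1) + A ^ (p₂ + 1))
  set I := ∫ x : EuclideanSpace ℝ (Fin N), exp (-((p₁ - 1) * √lam * ‖x‖))
  refine ⟨max (K * I) 1, lt_max_of_lt_right one_pos, 1, one_pos, fun R hR τ hτ => ?_⟩
  have hR0 : 0 < R := one_pos.trans_le hR
  have hpoint := fun x => abs_mul_le_of_le_mul_rpow_mul_exp (g := fun s => τ * f s - f (τ * s))
    hwpos hA hα hk.le hp₁.le hp (by positivity)
    (fun s hs => abs_mul_sub_apply_mul_le hD.le hp₁.le hp hfdiff (hf0 0 le_rfl) hfgrowth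
      (fun t ht => hfderiv t ht.le) hs hτ) hR0
    (by simpa only [hy, mul_comm R] using mul_norm_sub_le_norm_sub_smul_add hR0.le x x₀ y)
  rw [← Real.norm_eq_abs]
  calc _ ≤ ∫ x, _ :=
        norm_integral_le_of_norm_le ((hint.comp_sub_right (R • x₀)).const_mul _)
          (ae_of_all _ hpoint)
    _ = K * I * (|τ - 1| * (1 + τ ^ (p₂ - 1)) * R ^ (-(((N : ℝ) - 1) / 2)) *
          exp (-(2 * R * √lam))) := by
        rw [integral_const_mul,
          integral_sub_right_eq_self (fun x => exp (-((p₁ - 1) * √lam * ‖x‖)))]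
        ring
    _ ≤ max (K * I) 1 * (|τ - 1| * (1 + τ ^ (p₂ - 1)) * R ^ (-(((N : ℝ) - 1) / 2)) *
          exp (-(2 * R * √lam))) := by
        gcongr; exact le_max_left _ _
    _ = _ := by ring

theorem stmt9 (N : ℕ) (hN : 2 ≤ N) (lam : ℝ) (hlam : 0 < lam)
    (w : EuclideanSpace ℝ (Fin N) → ℝ) (σ : ℝ) (hσ : 0 < σ)
    (hwcont : Continuous w) (hwpos : ∀ x, 0 < w x)
    (hwrad : ∀ x y : EuclideanSpace ℝ (Fin N), ‖x‖ = ‖y‖ → w x = w y)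
    (hwlim : Tendsto
      (fun x => w x * ‖x‖ ^ (((N : ℝ) - 1) / 2) * Real.exp (Real.sqrt lam * ‖x‖))
      (comap (fun x : EuclideanSpace ℝ (Fin N) => ‖x‖) atTop) (nhds σ))
    (f : ℝ → ℝ) (D p₁ p₂ : ℝ) (hD : 0 < D) (hp₁ : 1 < p₁) (hp : p₁ ≤ p₂)
    (hfC1 : ContDiffOn ℝ 1 f (Set.Ici 0)) (hf0 : ∀ t ≤ (0:ℝ), f t = 0)
    (hfgrowth : ∀ t ≥ (0:ℝ), |f t| ≤ D * (t ^ p₁ + t ^ p₂))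
    (hfderiv : ∀ t ≥ (0:ℝ), |deriv f t| ≤ D * (t ^ (p₁ - 1) + t ^ (p₂ - 1)))
    (x₀ y : EuclideanSpace ℝ (Fin N)) (hx₀ : ‖x₀‖ = 1) (hy : ‖y - x₀‖ = 2) :
    ∃ C > (0:ℝ), ∃ R₀ > (0:ℝ), ∀ R ≥ R₀, ∀ τ ≥ (0:ℝ),
      |∫ x, (τ * f (w (x - R • x₀)) - f (τ * w (x - R • x₀))) * w (x - R • y)| ≤
        C * |τ - 1| * (1 + τ ^ (p₂ - 1)) *
          R ^ (-(((N : ℝ) - 1) / 2)) * Real.exp (-(2 * R * Real.sqrt lam)) :=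
  stmt9_general N hN lam hlam w σ hwcont hwpos hwlim f D p₁ p₂ hD hp₁ hp hfC1 hf0 hfgrowth hfderiv
    x₀ y hy
end

section
/- Let N ≥ 1 and let u : ℝ^N → ℝ be nonnegative, locally integrable, and radially symmetric with u(x) = φ(|x|) for some nonincreasing φ : [0,∞) → [0,∞). Then the function μ(u)(x) := |B₁(0)|^{−1} ∫_{B₁(x)} u(z) dz is radially symmetric and radially nonincreasing: there exists a nonincreasing ψ : [0,∞) → [0,∞) with μ(u)(x) = ψ(|x|) for all x ∈ ℝ^N. -/
/-!
Let `R` be the reflection in the perpendicular bisector of `a` and `b`, with `‖a‖ ≤ ‖b‖`, so that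
the origin lies on the side of `a`. `R` preserves volume and maps `B(a, r) \ B(b, r)` onto
`B(b, r) \ B(a, r)`, and a point `z` on the side of `a` satisfies `‖z‖ ≤ ‖R z‖`, hence
`u (R z) ≤ u z` for radially nonincreasing `u`. Comparing the integrals over the two lunes gives
`∫_{B(b,r)} u ≤ ∫_{B(a,r)} u`; applied in both directions it shows that the ball average depends
only on `‖x‖`, and it is then nonincreasing in `‖x‖`.
-/

open MeasureTheory Metric

theorem setIntegral_le_setIntegral_of_preimage_sdiff {α : Type*} [MeasurableSpace α]
    {μ : Measure α} {R : α → α} (hR : MeasurePreserving R μ μ) (hRe : MeasurableEmbedding R)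
    {f : α → ℝ} {A B : Set α} (hA : MeasurableSet A) (hB : MeasurableSet B)
    (hfA : IntegrableOn f A μ) (hfB : IntegrableOn f B μ)
    (hpre : R ⁻¹' (B \ A) = A \ B) (hle : ∀ x ∈ A \ B, f (R x) ≤ f x) :
    ∫ x in B, f x ∂μ ≤ ∫ x in A, f x ∂μ := by
  have hfR : IntegrableOn (f ∘ R) (A \ B) μ := by
    rw [← hpre]
    exact (hR.integrableOn_comp_preimage hRe).2 (hfB.mono_set Set.sdiff_subset)
  have hswap : ∫ x in B \ A, f x ∂μ = ∫ x in A \ B, f (R x) ∂μ := by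
    rw [← hR.setIntegral_preimage_emb hRe f, hpre]
  calc ∫ x in B, f x ∂μ = ∫ x in A ∩ B, f x ∂μ + ∫ x in A \ B, f (R x) ∂μ := by
        rw [← hswap, Set.inter_comm, integral_inter_add_sdiff hA hfB]
    _ ≤ ∫ x in A ∩ B, f x ∂μ + ∫ x in A \ B, f x ∂μ :=
        (add_le_add_iff_left _).2 <|
          setIntegral_mono_on hfR (hfA.mono_set Set.sdiff_subset) (hA.diff hB) hle
    _ = ∫ x in A, f x ∂μ := integral_inter_add_sdiff hB hfA

section BisectorReflection

variable {E : Type*} [NormedAddCommGroup E] [InnerProductSpace ℝ E] (a b : E)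

/-- The reflection in the perpendicular bisector hyperplane of `a` and `b`. -/
noncomputable def bisectorReflection (z : E) : E :=
  (ℝ ∙ (b - a))ᗮ.reflection (z - a) + b

@[simp]
theorem bisectorReflection_left : bisectorReflection a b a = b := by
  simp [bisectorReflection]

@[simp]
theorem bisectorReflection_right : bisectorReflection a b b = a := by
  simp [bisectorReflection, Submodule.reflection_orthogonalComplement_singleton_eq_neg]

theorem isometry_bisectorReflection : Isometry (bisectorReflection a b) :=
  Isometry.of_dist_eq fun z w => by
    simp [bisectorReflection, dist_eq_norm, ← map_sub]

theorem bisectorReflection_eq_add_smul (z : E) :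
    bisectorReflection a b z =
      z + (1 - 2 * inner ℝ (b - a) (z - a) / ‖b - a‖ ^ 2) • (b - a) := by
  rw [bisectorReflection, Submodule.reflection_orthogonal_apply,
    Submodule.reflection_singleton_apply]
  simp only [RCLike.ofReal_real_eq_id, id, sub_smul, one_smul, mul_div_assoc, mul_smul]
  module

theorem norm_le_norm_bisectorReflection {a b z : E} (hab : ‖a‖ ≤ ‖b‖)
    (hz : dist z a ≤ dist z b) : ‖z‖ ≤ ‖bisectorReflection a b z‖ := by
  obtain ⟨v, rfl⟩ : ∃ v, b = a + v := ⟨b - a, by abel⟩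
  rcases eq_or_ne v 0 with rfl | hv0
  · simp [bisectorReflection_eq_add_smul]
  have hv : 0 < ‖v‖ ^ 2 := by positivity
  rw [bisectorReflection_eq_add_smul, add_sub_cancel_left]
  generalize hc_def : 1 - 2 * inner ℝ v (z - a) / ‖v‖ ^ 2 = c
  have hcv : c * ‖v‖ ^ 2 = ‖v‖ ^ 2 - 2 * inner ℝ v (z - a) := by
    rw [← hc_def, sub_mul, one_mul, div_mul_cancel₀ _ hv.ne']
  have hz2 : ‖z - a‖ ^ 2 ≤ ‖z - a‖ ^ 2 - 2 * inner ℝ v (z - a) + ‖v‖ ^ 2 := by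
    rw [real_inner_comm, ← norm_sub_sq_real, ← sub_add_eq_sub_sub, ← dist_eq_norm,
      ← dist_eq_norm]
    exact pow_le_pow_left₀ dist_nonneg hz 2
  have hc0 : 0 ≤ c := by nlinarith
  have hR : ‖z + c • v‖ ^ 2 = ‖z‖ ^ 2 + c * (‖a + v‖ ^ 2 - ‖a‖ ^ 2) := by
    rw [norm_add_sq_real, norm_add_sq_real, inner_smul_right, norm_smul, mul_pow,
      Real.norm_eq_abs, sq_abs]
    rw [inner_sub_right, real_inner_comm z v, real_inner_comm a v] at hcv
    linear_combination c * hcv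
  have hab2 : ‖a‖ ^ 2 ≤ ‖a + v‖ ^ 2 := pow_le_pow_left₀ (norm_nonneg a) hab 2
  refine le_of_sq_le_sq ?_ (norm_nonneg _)
  nlinarith [mul_nonneg hc0 (sub_nonneg.2 hab2)]

theorem preimage_bisectorReflection_ball_sdiff (r : ℝ) :
    bisectorReflection a b ⁻¹' (ball b r \ ball a r) = ball a r \ ball b r := by
  ext z
  have hiso := isometry_bisectorReflection a b
  have hb : dist (bisectorReflection a b z) b = dist z a := by simpa using hiso.dist_eq z a
  have ha : dist (bisectorReflection a b z) a = dist z b := by simpa using hiso.dist_eq z b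
  simp only [Set.mem_preimage, Set.mem_sdiff, mem_ball, hb, ha]

variable [FiniteDimensional ℝ E] [MeasurableSpace E] [BorelSpace E]

theorem measurableEmbedding_bisectorReflection : MeasurableEmbedding (bisectorReflection a b) :=
  (isometry_bisectorReflection a b).isClosedEmbedding.measurableEmbedding

theorem measurePreserving_bisectorReflection :
    MeasurePreserving (bisectorReflection a b) volume volume :=
  (measurePreserving_add_right volume b).comp
    ((LinearIsometryEquiv.measurePreserving _).comp (measurePreserving_sub_right volume a))

end BisectorReflection

section RadialAverage

variable {E : Type*} [NormedAddCommGroup E] [InnerProductSpace ℝ E] [FiniteDimensional ℝ E]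
  [MeasurableSpace E] [BorelSpace E] {u : E → ℝ} {φ : ℝ → ℝ}

theorem setIntegral_ball_le_of_norm_le (hu : ∀ x, u x = φ ‖x‖) (hφ : AntitoneOn φ (Set.Ici 0))
    (hloc : LocallyIntegrable u volume) (r : ℝ) {a b : E} (hab : ‖a‖ ≤ ‖b‖) :
    ∫ z in ball b r, u z ≤ ∫ z in ball a r, u z := by
  have hint : ∀ x, IntegrableOn u (ball x r) volume := fun x =>
    (hloc.integrableOn_isCompact (isCompact_closedBall x r)).mono_set ball_subset_closedBall
  refine setIntegral_le_setIntegral_of_preimage_sdiff (measurePreserving_bisectorReflection a b)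
    (measurableEmbedding_bisectorReflection a b) measurableSet_ball measurableSet_ball
    (hint a) (hint b) (preimage_bisectorReflection_ball_sdiff a b r) ?_
  rintro z ⟨hza, hzb⟩
  rw [mem_ball] at hza
  rw [mem_ball, not_lt] at hzb
  rw [hu, hu]
  exact hφ (norm_nonneg _) (norm_nonneg _)
    (norm_le_norm_bisectorReflection hab (hza.le.trans hzb))

theorem setIntegral_ball_eq_of_norm_eq (hu : ∀ x, u x = φ ‖x‖) (hφ : AntitoneOn φ (Set.Ici 0))
    (hloc : LocallyIntegrable u volume) (r : ℝ) {a b : E} (hab : ‖a‖ = ‖b‖) :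
    ∫ z in ball a r, u z = ∫ z in ball b r, u z :=
  le_antisymm (setIntegral_ball_le_of_norm_le hu hφ hloc r hab.ge)
    (setIntegral_ball_le_of_norm_le hu hφ hloc r hab.le)

end RadialAverage

theorem stmt13_general (N : ℕ) (hN : 1 ≤ N) (u : EuclideanSpace ℝ (Fin N) → ℝ)
    (hnn : ∀ x, 0 ≤ u x) (hloc : LocallyIntegrable u volume)
    (φ : ℝ → ℝ) (hφrad : ∀ x, u x = φ ‖x‖)
    (hφmono : AntitoneOn φ (Set.Ici 0)) :
    ∃ ψ : ℝ → ℝ, AntitoneOn ψ (Set.Ici 0) ∧ (∀ t ∈ Set.Ici (0:ℝ), 0 ≤ ψ t) ∧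
      ∀ x : EuclideanSpace ℝ (Fin N),
        (volume (Metric.ball (0 : EuclideanSpace ℝ (Fin N)) 1)).toReal⁻¹ *
          (∫ z in Metric.ball x 1, u z) = ψ ‖x‖ := by
  set c := (volume (ball (0 : EuclideanSpace ℝ (Fin N)) 1)).toReal⁻¹
  set e : EuclideanSpace ℝ (Fin N) := EuclideanSpace.single ⟨0, hN⟩ 1
  have he : ‖e‖ = 1 := by simp [e]
  have hnorm : ∀ t, 0 ≤ t → ‖t • e‖ = t := fun t ht => by
    rw [norm_smul, he, mul_one, Real.norm_of_nonneg ht]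
  refine ⟨fun t => c * ∫ z in ball (t • e) 1, u z, ?_, ?_, ?_⟩
  · intro s hs t ht hst
    have := setIntegral_ball_le_of_norm_le hφrad hφmono hloc 1
      (show ‖s • e‖ ≤ ‖t • e‖ by rwa [hnorm s hs, hnorm t ht])
    exact mul_le_mul_of_nonneg_left this (by positivity)
  · exact fun t _ =>
      mul_nonneg (by positivity) (setIntegral_nonneg measurableSet_ball fun z _ => hnn z)
  · intro x
    rw [setIntegral_ball_eq_of_norm_eq hφrad hφmono hloc 1 (hnorm ‖x‖ (norm_nonneg x)).symm]

theorem stmt13 (N : ℕ) (hN : 1 ≤ N) (u : EuclideanSpace ℝ (Fin N) → ℝ)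
    (hnn : ∀ x, 0 ≤ u x) (hloc : LocallyIntegrable u volume)
    (φ : ℝ → ℝ) (hφrad : ∀ x, u x = φ ‖x‖)
    (hφmono : AntitoneOn φ (Set.Ici 0))
    (hφnn : ∀ t ∈ Set.Ici (0:ℝ), 0 ≤ φ t) :
    ∃ ψ : ℝ → ℝ, AntitoneOn ψ (Set.Ici 0) ∧ (∀ t ∈ Set.Ici (0:ℝ), 0 ≤ ψ t) ∧
      ∀ x : EuclideanSpace ℝ (Fin N),
        (volume (Metric.ball (0 : EuclideanSpace ℝ (Fin N)) 1)).toReal⁻¹ *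
          (∫ z in Metric.ball x 1, u z) = ψ ‖x‖ :=
  stmt13_general N hN u hnn hloc φ hφrad hφmono
end

section
/- Let f : ℝ → ℝ be continuous with f(t) = 0 for t ≤ 0 and with t ↦ f(t)/t strictly increasing and positive on (0,∞), and set F(t) := ∫₀^t f(s) ds. Then for every v > 0, the function h(p) := (p²/2) f(v) v − F(p v) defined for p ≥ 0 attains a strict global maximum at p = 1; that is, h(p) < h(1) = (1/2) f(v) v − F(v) for every p ≥ 0 with p ≠ 1. -/
/-!
With `c := f v / v`, one has `h p - h 1 = ∫ s in p v..v, (f s - c s) ds`. Strict monotonicity of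
`f t / t` gives `f s < c s` for `0 < s < v` and `f s > c s` for `s > v`, so this integral is
negative whenever `0 ≤ p ≠ 1`.
-/

open MeasureTheory Set

section RatioStrictMono

variable {f : ℝ → ℝ} (hmono : StrictMonoOn (fun t => f t / t) (Ioi 0))
include hmono

lemma lt_div_mul_of_strictMonoOn_div {s v : ℝ} (hs : 0 < s) (hsv : s < v) :
    f s < f v / v * s := by
  have hratio : f s / s < f v / v := hmono hs (hs.trans hsv) hsv
  rwa [div_lt_iff₀ hs] at hratio

lemma div_mul_lt_of_strictMonoOn_div {s v : ℝ} (hv : 0 < v) (hvs : v < s) :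
    f v / v * s < f s := by
  have hratio : f v / v < f s / s := hmono hv (hv.trans hvs) hvs
  rwa [lt_div_iff₀ (hv.trans hvs)] at hratio

lemma integral_lt_of_strictMonoOn_div {a v : ℝ} (hf : IntervalIntegrable f volume a v)
    (hv : 0 < v) (ha : 0 ≤ a) (hav : a ≠ v) :
    ∫ s in a..v, f s < f v / v * ((v ^ 2 - a ^ 2) / 2) := by
  have hlin : IntervalIntegrable (fun s => f v / v * s) volume a v :=
    (continuous_const.mul continuous_id).intervalIntegrable a v
  suffices hgap : 0 < ∫ s in a..v, (f v / v * s - f s) by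
    rwa [intervalIntegral.integral_sub hlin hf, intervalIntegral.integral_const_mul,
      integral_id, sub_pos] at hgap
  rcases hav.lt_or_gt with hlt | hgt
  · refine intervalIntegral.intervalIntegral_pos_of_pos_on (hlin.sub hf) (fun s hs => ?_) hlt
    exact sub_pos.2 (lt_div_mul_of_strictMonoOn_div hmono (ha.trans_lt hs.1) hs.2)
  · rw [intervalIntegral.integral_symm, neg_pos, ← neg_pos, ← intervalIntegral.integral_neg]
    refine intervalIntegral.intervalIntegral_pos_of_pos_on (hlin.sub hf).symm.neg
      (fun s hs => ?_) hgt
    exact neg_pos.2 (sub_neg.2 (div_mul_lt_of_strictMonoOn_div hmono hv hs.1))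

end RatioStrictMono

theorem stmt14_general (f : ℝ → ℝ) (hfcont : Continuous f)
    (hmono : StrictMonoOn (fun t => f t / t) (Set.Ioi 0))
    (F : ℝ → ℝ) (hF : ∀ t, F t = ∫ s in (0:ℝ)..t, f s)
    (v : ℝ) (hv : 0 < v) :
    ((1:ℝ) ^ 2 / 2 * (f v * v) - F (1 * v) = 1 / 2 * (f v * v) - F v) ∧
    ∀ p ≥ (0:ℝ), p ≠ 1 →
      p ^ 2 / 2 * (f v * v) - F (p * v) < 1 / 2 * (f v * v) - F v := by
  refine ⟨by norm_num, fun p hp hp1 => ?_⟩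
  have hdiff : F v - F (p * v) = ∫ s in (p * v)..v, f s := by
    rw [hF, hF, intervalIntegral.integral_interval_sub_left
      (hfcont.intervalIntegrable 0 v) (hfcont.intervalIntegrable 0 (p * v))]
  have hpv : p * v ≠ v := fun h => hp1 (by simpa [hv.ne'] using h)
  have hlt := integral_lt_of_strictMonoOn_div hmono (hfcont.intervalIntegrable _ _) hv
    (mul_nonneg hp hv.le) hpv
  have hquad : f v / v * ((v ^ 2 - (p * v) ^ 2) / 2) = (1 - p ^ 2) / 2 * (f v * v) := by
    field_simp
  linarith

theorem stmt14 (f : ℝ → ℝ) (hfcont : Continuous f) (hf0 : ∀ t ≤ (0:ℝ), f t = 0)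
    (hmono : StrictMonoOn (fun t => f t / t) (Set.Ioi 0))
    (hpos : ∀ t > (0:ℝ), 0 < f t / t)
    (F : ℝ → ℝ) (hF : ∀ t, F t = ∫ s in (0:ℝ)..t, f s)
    (v : ℝ) (hv : 0 < v) :
    ((1:ℝ) ^ 2 / 2 * (f v * v) - F (1 * v) = 1 / 2 * (f v * v) - F v) ∧
    ∀ p ≥ (0:ℝ), p ≠ 1 →
      p ^ 2 / 2 * (f v * v) - F (p * v) < 1 / 2 * (f v * v) - F v :=
  stmt14_general f hfcont hmono F hF v hv
end

section
/- Let N ≥ 1. Assume w : ℝ^N → ℝ is continuous, positive, radially symmetric with w(x) = φ(|x|) for a strictly decreasing φ, and w(x) → 0 as |x| → ∞. Assume there exists r₀ > 0 such that { x ∈ ℝ^N : μ(w)(x) > (1/2)‖μ(w)‖_∞ } is exactly the open ball B_{r₀}(0). Let ξ : ℝ^N → [0,1] be continuous with ξ ≡ 0 on the ball B_ρ(0) and ξ ≡ 1 on ℝ^N \ B_{2ρ}(0), for some ρ > 0. Then for every y ∈ ℝ^N with |y| ≥ 1 and every R > 2ρ + 1 + r₀, the function Φ(x) := ξ(x) w(x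 − Ry) satisfies β(Φ) = Ry. -/
open MeasureTheory Filter Metric

/-- The local average `μ(u)(x) = |B₁(0)|⁻¹ ∫_{B₁(x)} |u|`. -/
noncomputable def muAvg (N : ℕ) (u : EuclideanSpace ℝ (Fin N) → ℝ)
    (x : EuclideanSpace ℝ (Fin N)) : ℝ :=
  (volume (Metric.ball (0 : EuclideanSpace ℝ (Fin N)) 1)).toReal⁻¹ *
    ∫ z in Metric.ball x 1, |u z|

/-- The sup norm `‖μ(u)‖_∞`. -/
noncomputable def muSup (N : ℕ) (u : EuclideanSpace ℝ (Fin N) → ℝ) : ℝ :=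
  ⨆ x, |muAvg N u x|

/-- The truncation `û(x) = (μ(u)(x) − ‖μ(u)‖_∞ / 2)⁺`. -/
noncomputable def uHat (N : ℕ) (u : EuclideanSpace ℝ (Fin N) → ℝ)
    (x : EuclideanSpace ℝ (Fin N)) : ℝ :=
  max (muAvg N u x - muSup N u / 2) 0

/-- The barycenter `β(u) = (∫ û)⁻¹ ∫ x û(x) dx`. -/
noncomputable def bary (N : ℕ) (u : EuclideanSpace ℝ (Fin N) → ℝ) :
    EuclideanSpace ℝ (Fin N) :=
  (∫ x, uHat N u x)⁻¹ • ∫ x, uHat N u x • x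

/-! Unit balls centred in the superlevel set `B_{r₀}(Ry)` of `μ(w(· - Ry))` avoid `B_{2ρ}(0)`,
so there the cutoff `ξ` is invisible to `μ`; elsewhere `μ(Φ) ≤ μ(w(· - Ry))` stays below
the half-maximum. Hence `‖μ(Φ)‖_∞ = ‖μ(w)‖_∞` and `Φ̂` is the translate of `ŵ` by `Ry`, so
`β(Φ) = β(w) + Ry`, and `β(w) = 0` because `w`, hence `ŵ`, is even. -/

theorem ciSup_eq_of_le_of_eq_of_half_lt {ι : Type*} [Nonempty ι] {f g : ι → ℝ}
    (hg : BddAbove (Set.range g)) (hpos : 0 < ⨆ i, g i) (hle : ∀ i, f i ≤ g i)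
    (heq : ∀ i, (⨆ j, g j) / 2 < g i → f i = g i) : ⨆ i, f i = ⨆ i, g i := by
  have hf : BddAbove (Set.range f) := hg.range_mono g hle
  refine le_antisymm (ciSup_mono hg hle) ?_
  have hmax : ⨆ i, g i ≤ max (⨆ i, f i) ((⨆ i, g i) / 2) := by
    refine ciSup_le fun i => ?_
    by_cases hi : (⨆ j, g j) / 2 < g i
    · exact le_max_of_le_left (heq i hi ▸ le_ciSup hf i)
    · exact le_max_of_le_right (not_lt.1 hi)
  exact (le_max_iff.1 hmax).resolve_right (by linarith)

theorem integral_smul_id_eq_zero_of_even {F : Type*} [NormedAddCommGroup F] [NormedSpace ℝ F]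
    [MeasurableSpace F] [BorelSpace F] (μ : Measure F) [μ.IsNegInvariant] {f : F → ℝ}
    (hf : ∀ x, f (-x) = f x) : ∫ x, f x • x ∂μ = 0 := by
  have h := integral_neg_eq_self (fun x => f x • x) μ
  simp only [hf, smul_neg, integral_neg] at h
  have h2 : (2 : ℝ) • ∫ x, f x • x ∂μ = 0 := by
    rw [two_smul]; nth_rewrite 1 [← h]; exact neg_add_cancel _
  exact (smul_eq_zero.1 h2).resolve_left two_ne_zero

section Euclidean

variable {N : ℕ}

local notation "E" => EuclideanSpace ℝ (Fin N)

theorem muAvg_eq_integral_ball_zero (u : E → ℝ) (x : E) :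
    muAvg N u x =
      (volume (ball (0 : E) 1)).toReal⁻¹ * ∫ t in ball (0 : E) 1, |u (x + t)| := by
  have h := (measurePreserving_add_left (volume : Measure E) x).setIntegral_preimage_emb
    (measurableEmbedding_addLeft x) (fun z => |u z|) (ball x 1)
  rw [show (x + ·) ⁻¹' ball x 1 = ball 0 1 by ext; simp] at h
  rw [muAvg, ← h]

theorem setIntegral_ball_zero_comp_neg (f : E → ℝ) (r : ℝ) :
    ∫ t in ball (0 : E) r, f (-t) = ∫ t in ball (0 : E) r, f t := by
  have h := (Measure.measurePreserving_neg (volume : Measure E)).setIntegral_preimage_emb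
    (MeasurableEquiv.neg E).measurableEmbedding f (ball 0 r)
  rwa [show Neg.neg ⁻¹' ball (0 : E) r = ball 0 r by ext; simp] at h

theorem muAvg_nonneg (u : E → ℝ) (x : E) : 0 ≤ muAvg N u x :=
  mul_nonneg (inv_nonneg.2 ENNReal.toReal_nonneg) (integral_nonneg fun _ => abs_nonneg _)

theorem muAvg_comp_sub (u : E → ℝ) (c x : E) :
    muAvg N (fun z => u (z - c)) x = muAvg N u (x - c) := by
  simp only [muAvg_eq_integral_ball_zero, add_sub_right_comm]

theorem muAvg_neg {u : E → ℝ} (hu : ∀ z, u (-z) = u z) (x : E) :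
    muAvg N u (-x) = muAvg N u x := by
  rw [muAvg_eq_integral_ball_zero, muAvg_eq_integral_ball_zero,
    ← setIntegral_ball_zero_comp_neg (fun t => |u (x + t)|)]
  simp only [← hu (x + _), neg_add, neg_neg]

theorem muAvg_mono {u v : E → ℝ} (hv : LocallyIntegrable v) (h : ∀ z, |u z| ≤ |v z|)
    (x : E) :
    muAvg N u x ≤ muAvg N v x := by
  refine mul_le_mul_of_nonneg_left ?_ (inv_nonneg.2 ENNReal.toReal_nonneg)
  refine integral_mono_of_nonneg (.of_forall fun _ => abs_nonneg _) ?_ (.of_forall h)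
  exact ((hv.integrableOn_isCompact (isCompact_closedBall x 1)).mono_set
    ball_subset_closedBall).abs

theorem muAvg_congr {u v : E → ℝ} {x : E} (h : Set.EqOn u v (ball x 1)) :
    muAvg N u x = muAvg N v x := by
  rw [muAvg, muAvg, setIntegral_congr_fun measurableSet_ball fun z hz => by rw [h hz]]

theorem continuous_muAvg {u : E → ℝ} (hu : Continuous u) : Continuous (muAvg N u) := by
  rw [funext (muAvg_eq_integral_ball_zero u)]
  refine continuous_const.mul (continuous_iff_continuousAt.2 fun x₀ => ?_)
  obtain ⟨U, hU, hUx₀⟩ := exists_compact_mem_nhds x₀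
  obtain ⟨M, hM⟩ := (hU.add (isCompact_closedBall (0 : E) 1)).bddAbove_image
    hu.abs.continuousOn
  refine continuousAt_of_dominated (bound := fun _ => M) (.of_forall fun x => ?_) ?_
    (integrableOn_const measure_ball_lt_top.ne) (.of_forall fun t => by fun_prop)
  · exact (by fun_prop : Continuous fun t => |u (x + t)|).aestronglyMeasurable
  · filter_upwards [hUx₀] with x hx
    refine ae_restrict_of_forall_mem measurableSet_ball fun t ht => ?_
    rw [Real.norm_eq_abs, abs_abs]
    exact hM ⟨x + t, Set.add_mem_add hx (ball_subset_closedBall ht), rfl⟩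

theorem muSup_eq_iSup (u : E → ℝ) : muSup N u = ⨆ x, muAvg N u x := by
  simp only [muSup, abs_of_nonneg (muAvg_nonneg u _)]

theorem muAvg_le_muSup {u : E → ℝ} (hu : BddAbove (Set.range (muAvg N u))) (x : E) :
    muAvg N u x ≤ muSup N u :=
  muSup_eq_iSup u ▸ le_ciSup hu x

theorem range_muAvg_comp_sub (u : E → ℝ) (c : E) :
    Set.range (muAvg N fun z => u (z - c)) = Set.range (muAvg N u) := by
  rw [funext (muAvg_comp_sub u c)]
  exact (Equiv.subRight c).surjective.range_comp (muAvg N u)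

theorem muSup_comp_sub (u : E → ℝ) (c : E) : muSup N (fun z => u (z - c)) = muSup N u := by
  simp only [muSup_eq_iSup, iSup, range_muAvg_comp_sub]

-- The bound outside the ball holds whatever value `muSup N u` takes, so this is not circular.
theorem bddAbove_range_muAvg {u : E → ℝ} (hu : Continuous u) {r : ℝ}
    (hlevel : {x : E | muSup N u / 2 < muAvg N u x} ⊆ ball 0 r) :
    BddAbove (Set.range (muAvg N u)) := by
  refine (((isCompact_closedBall (0 : E) r).bddAbove_image
    (continuous_muAvg hu).continuousOn).union (bddAbove_Iic (a := muSup N u / 2))).mono ?_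
  rintro _ ⟨x, rfl⟩
  by_cases hx : muSup N u / 2 < muAvg N u x
  · exact Or.inl ⟨x, ball_subset_closedBall (hlevel hx), rfl⟩
  · exact Or.inr (not_lt.1 hx)

theorem uHat_comp_sub (u : E → ℝ) (c x : E) :
    uHat N (fun z => u (z - c)) x = uHat N u (x - c) := by
  rw [uHat, uHat, muAvg_comp_sub, muSup_comp_sub]

theorem uHat_neg {u : E → ℝ} (hu : ∀ z, u (-z) = u z) (x : E) :
    uHat N u (-x) = uHat N u x := by
  rw [uHat, uHat, muAvg_neg hu]

theorem support_uHat (u : E → ℝ) :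
    Function.support (uHat N u) = {x | muSup N u / 2 < muAvg N u x} := by
  ext x
  simp only [Function.mem_support, Set.mem_ofPred_eq, uHat, ne_eq, max_eq_right_iff, not_le,
    sub_nonpos]

theorem uHat_mul_eq_of_eq_one_near_superlevel {ξ v : E → ℝ} (hv : Continuous v)
    (hbdd : BddAbove (Set.range (muAvg N v))) (hpos : 0 < muSup N v) (hξ : ∀ z, |ξ z| ≤ 1)
    (hξ1 : ∀ x, muSup N v / 2 < muAvg N v x → ∀ z ∈ ball x 1, ξ z = 1) :
    uHat N (fun z => ξ z * v z) = uHat N v := by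
  have hle (x : E) : muAvg N (fun z => ξ z * v z) x ≤ muAvg N v x :=
    muAvg_mono hv.locallyIntegrable
      (fun z => by rw [abs_mul]; exact mul_le_of_le_one_left (abs_nonneg _) (hξ z)) x
  have heq (x : E) (hx : muSup N v / 2 < muAvg N v x) :
      muAvg N (fun z => ξ z * v z) x = muAvg N v x :=
    muAvg_congr fun z hz => by simp only [hξ1 x hx z hz, one_mul]
  have hsup : muSup N (fun z => ξ z * v z) = muSup N v := by
    rw [muSup_eq_iSup] at hpos heq ⊢
    rw [muSup_eq_iSup]
    exact ciSup_eq_of_le_of_eq_of_half_lt hbdd hpos hle heq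
  funext x
  rw [uHat, uHat, hsup]
  by_cases hx : muSup N v / 2 < muAvg N v x
  · rw [heq x hx]
  · rw [max_eq_right, max_eq_right] <;> linarith [hle x]

theorem bary_congr {u v : E → ℝ} (h : uHat N u = uHat N v) : bary N u = bary N v := by
  rw [bary, bary, h]

theorem bary_eq_zero_of_even {u : E → ℝ} (hu : ∀ z, u (-z) = u z) : bary N u = 0 := by
  rw [bary, integral_smul_id_eq_zero_of_even volume (uHat_neg hu), smul_zero]

theorem bary_comp_sub {u : E → ℝ} (c : E) (hint : Integrable (uHat N u))
    (hint' : Integrable fun x => uHat N u x • x) (hne : ∫ x, uHat N u x ≠ 0) :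
    bary N (fun z => u (z - c)) = bary N u + c := by
  have hmass : ∫ x, uHat N u (x - c) = ∫ x, uHat N u x := integral_sub_right_eq_self _ c
  have hmoment :
      ∫ x, uHat N u (x - c) • x = (∫ x, uHat N u x • x) + (∫ x, uHat N u x) • c := by
    rw [← integral_add_right_eq_self _ c, ← integral_smul_const,
      ← integral_add hint' (hint.smul_const c)]
    simp only [add_sub_cancel_right, smul_add]
  simp only [bary, uHat_comp_sub, hmass, hmoment, smul_add, smul_smul, inv_mul_cancel₀ hne,
    one_smul]

theorem bary_comp_sub_of_superlevel_eq_ball {u : E → ℝ} (hu : Continuous u) {r : ℝ}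
    (hr : 0 < r) (hlevel : {x : E | muSup N u / 2 < muAvg N u x} = ball 0 r) (c : E) :
    bary N (fun z => u (z - c)) = bary N u + c := by
  have hsupp : Function.support (uHat N u) = ball 0 r := (support_uHat u).trans hlevel
  have hcont : Continuous (uHat N u) :=
    ((continuous_muAvg hu).sub continuous_const).max continuous_const
  have hcs : HasCompactSupport (uHat N u) :=
    (isCompact_closedBall 0 r).of_isClosed_subset (isClosed_tsupport _)
      (closure_minimal (hsupp ▸ ball_subset_closedBall) isClosed_closedBall)
  have hint := hcont.integrable_of_hasCompactSupport hcs (μ := volume)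
  refine bary_comp_sub c hint ((hcont.smul continuous_id).integrable_of_hasCompactSupport
    (hcs.smul_right)) (ne_of_gt ?_)
  rw [integral_pos_iff_support_of_nonneg (f := uHat N u) (fun _ => le_max_right _ _) hint,
    hsupp]
  exact measure_ball_pos _ _ hr

end Euclidean

theorem stmt19_general (N : ℕ)
    (w : EuclideanSpace ℝ (Fin N) → ℝ) (hwcont : Continuous w)
    (φ : ℝ → ℝ) (hφrad : ∀ x, w x = φ ‖x‖)
    (r₀ : ℝ) (hr₀ : 0 < r₀)
    (hlevel : {x : EuclideanSpace ℝ (Fin N) | muSup N w / 2 < muAvg N w x} =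
      Metric.ball (0 : EuclideanSpace ℝ (Fin N)) r₀)
    (ρ : ℝ) (hρ : 0 < ρ)
    (ξ : EuclideanSpace ℝ (Fin N) → ℝ)
    (hξ01 : ∀ x, ξ x ∈ Set.Icc (0:ℝ) 1)
    (hξ1 : ∀ x ∉ Metric.ball (0 : EuclideanSpace ℝ (Fin N)) (2 * ρ), ξ x = 1) :
    ∀ y : EuclideanSpace ℝ (Fin N), 1 ≤ ‖y‖ → ∀ R : ℝ, 2 * ρ + 1 + r₀ < R →
      bary N (fun x => ξ x * w (x - R • y)) = R • y := by
  intro y hy R hR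
  have hc : 2 * ρ + 1 + r₀ < ‖R • y‖ := by
    rw [norm_smul, Real.norm_of_nonneg (by linarith)]; nlinarith
  have hbdd : BddAbove (Set.range (muAvg N w)) := bddAbove_range_muAvg hwcont hlevel.subset
  have hsup : 0 < muSup N w := by
    have h0 : (0 : EuclideanSpace ℝ (Fin N)) ∈ {x | muSup N w / 2 < muAvg N w x} :=
      hlevel ▸ mem_ball_self hr₀
    linarith [h0.out, muAvg_le_muSup hbdd 0]
  have hcut : uHat N (fun x => ξ x * w (x - R • y)) = uHat N (fun x => w (x - R • y)) := by
    refine uHat_mul_eq_of_eq_one_near_superlevel (hwcont.comp (continuous_sub_right _))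
      (range_muAvg_comp_sub w _ ▸ hbdd) (muSup_comp_sub w _ ▸ hsup)
      (fun z => abs_le.2 ⟨by linarith [(hξ01 z).1], (hξ01 z).2⟩) ?_
    intro x hx z hz
    rw [muSup_comp_sub, muAvg_comp_sub] at hx
    have hxc : ‖x - R • y‖ < r₀ := mem_ball_zero_iff.1 (hlevel ▸ hx)
    have hzx : ‖z - x‖ < 1 := mem_ball_iff_norm.1 hz
    have hzc := norm_sub_le_norm_sub_add_norm_sub z x (R • y)
    have hcz := norm_sub_norm_le (R • y) z
    rw [norm_sub_rev] at hcz
    exact hξ1 z (by rw [mem_ball_zero_iff, not_lt]; linarith)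
  rw [bary_congr hcut, bary_comp_sub_of_superlevel_eq_ball hwcont hr₀ hlevel,
    bary_eq_zero_of_even (fun z => by rw [hφrad, hφrad, norm_neg]), zero_add]

theorem stmt19 (N : ℕ) (hN : 1 ≤ N)
    (w : EuclideanSpace ℝ (Fin N) → ℝ) (hwcont : Continuous w) (hwpos : ∀ x, 0 < w x)
    (φ : ℝ → ℝ) (hφrad : ∀ x, w x = φ ‖x‖) (hφanti : StrictAntiOn φ (Set.Ici 0))
    (hwlim : Tendsto w (comap (fun x : EuclideanSpace ℝ (Fin N) => ‖x‖) atTop) (nhds 0))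
    (r₀ : ℝ) (hr₀ : 0 < r₀)
    (hlevel : {x : EuclideanSpace ℝ (Fin N) | muSup N w / 2 < muAvg N w x} =
      Metric.ball (0 : EuclideanSpace ℝ (Fin N)) r₀)
    (ρ : ℝ) (hρ : 0 < ρ)
    (ξ : EuclideanSpace ℝ (Fin N) → ℝ) (hξcont : Continuous ξ)
    (hξ01 : ∀ x, ξ x ∈ Set.Icc (0:ℝ) 1)
    (hξ0 : ∀ x ∈ Metric.ball (0 : EuclideanSpace ℝ (Fin N)) ρ, ξ x = 0)
    (hξ1 : ∀ x ∉ Metric.ball (0 : EuclideanSpace ℝ (Fin N)) (2 * ρ), ξ x = 1) :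
    ∀ y : EuclideanSpace ℝ (Fin N), 1 ≤ ‖y‖ → ∀ R : ℝ, 2 * ρ + 1 + r₀ < R →
      bary N (fun x => ξ x * w (x - R • y)) = R • y :=
  stmt19_general N w hwcont φ hφrad r₀ hr₀ hlevel ρ hρ ξ hξ01 hξ1
end
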